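/- arXiv:2009.00157 — 5 statements merged into one kernel-verified Lean document; each statement's English description precedes it below -/
import Mathlib

section
/- Let $N\geq 3$, $q>1$, $\lambda<(N-2)^2/4$, and set $p_+=\frac{N-2}{2}+\sqrt{(N-2)^2/4-\lambda}$, $\theta=\theta_++4\sqrt{(N-2)^2/4-\lambda}$ where $\theta_+=p_+(q-1)-2$, and let $\ell=\Theta^2-(N-2)\Theta+\lambda$ with $\Theta=(\theta+2)/(q-1)$. Then for every $\mu>0$ the function $u_{\mu}(x)=|x|^{-p_+}\left(\mu^{-2\sqrt{(N-2)^2/4-\lambda}}+\ell^{-1/2}|x|^{2\sqrt{(N-2)^2/4-\lambda}}\right)^{-2/(q-1)}$ is a positive solution of $-\Delta u-\lambda|x|^{-2}u+|x|^{\theta}u^q=0$ in $\mathbb{R}^N\setminus\{0\}$. -/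
/-!
For a radial function `u y = φ (‖y‖ ^ 2)` one has `Δu = 2 N φ'(t) + 4 t φ''(t)` at `t = ‖y‖ ^ 2`.
The bubble is of this form with `φ t = t ^ c * (a + b * t ^ s) ^ (-m)`, `c = -p₊/2`, `m = 2/(q-1)`,
`a = μ^(-2s)`, `b = ℓ^(-1/2)`. After clearing powers, the equation is a combination of the three
terms `t^c G^(-m)`, `t^(c+s) G^(-m-1)`, `t^(c+2s) G^(-m-2)` (where `G = a + b t^s`), and each
coefficient vanishes: the first because `p₊` is a root of `p² - (N-2)p + λ`, the second because
`p₊ = (N-2)/2 + s`, and the third, which also receives the nonlinear term `|x|^θ u^q`, because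
`ℓ = 4 m (m+1) s² = 8 s² (q+1)/(q-1)²`.
-/

open scoped BigOperators

noncomputable def lap {N : ℕ} (u : EuclideanSpace ℝ (Fin N) → ℝ)
    (x : EuclideanSpace ℝ (Fin N)) : ℝ :=
  ∑ i : Fin N, fderiv ℝ (fun y => fderiv ℝ u y (EuclideanSpace.single i 1)) x
    (EuclideanSpace.single i 1)

open Filter Topology

theorem lap_comp_norm_sq {N : ℕ} {φ φ' : ℝ → ℝ} {φ'' : ℝ} {x : EuclideanSpace ℝ (Fin N)}
    (hφ : ∀ᶠ t in 𝓝 (‖x‖ ^ 2), HasDerivAt φ (φ' t) t) (hφ' : HasDerivAt φ' φ'' (‖x‖ ^ 2)) :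
    lap (fun y => φ (‖y‖ ^ 2)) x = 2 * N * φ' (‖x‖ ^ 2) + 4 * ‖x‖ ^ 2 * φ'' := by
  have hchain : ∀ {ψ : ℝ → ℝ} {ψ' : ℝ} {y : EuclideanSpace ℝ (Fin N)}, HasDerivAt ψ ψ' (‖y‖ ^ 2) →
      HasFDerivAt (fun z => ψ (‖z‖ ^ 2)) (ψ' • (2 • innerSL ℝ y)) y :=
    fun {_ _ y} h => h.comp_hasFDerivAt y (hasStrictFDerivAt_norm_sq y).hasFDerivAt
  have hpartial : ∀ i : Fin N, (fun y => fderiv ℝ (fun z => φ (‖z‖ ^ 2)) y (EuclideanSpace.single i 1))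
      =ᶠ[𝓝 x] fun y => φ' (‖y‖ ^ 2) * (2 * y i) := by
    intro i
    filter_upwards [(continuous_norm.pow 2).continuousAt.eventually hφ] with y hy
    rw [(hchain hy).fderiv]
    simp [EuclideanSpace.inner_single_right]
  have hsecond : ∀ i : Fin N,
      fderiv ℝ (fun y => fderiv ℝ (fun z => φ (‖z‖ ^ 2)) y (EuclideanSpace.single i 1)) x
        (EuclideanSpace.single i 1) = 2 * φ' (‖x‖ ^ 2) + 4 * φ'' * x i ^ 2 := by
    intro i
    have hcoord : HasFDerivAt (fun y : EuclideanSpace ℝ (Fin N) => 2 * y i)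
        ((2 : ℝ) • EuclideanSpace.proj i) x :=
      (EuclideanSpace.proj (𝕜 := ℝ) i).hasFDerivAt.const_mul (2 : ℝ)
    rw [(hpartial i).fderiv_eq, ((hchain hφ').fun_mul hcoord).fderiv]
    simp only [add_apply, smul_apply, PiLp.proj_apply,
      PiLp.single_eq_same, smul_eq_mul, mul_one, coe_innerSL_apply,
      EuclideanSpace.inner_single_right, Real.ringHom_apply, one_mul, nsmul_eq_mul, Nat.cast_ofNat]
    ring
  have hsum : ∑ i, x i ^ 2 = ‖x‖ ^ 2 := by
    simp [EuclideanSpace.norm_sq_eq]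
  simp only [lap, hsecond, Finset.sum_add_distrib, ← Finset.mul_sum, hsum, Finset.sum_const,
    Finset.card_univ, Fintype.card_fin, nsmul_eq_mul]
  ring

section RadialProfile

variable (a b s c m : ℝ)

noncomputable def radialProfile (t : ℝ) : ℝ :=
  t ^ c * (a + b * t ^ s) ^ (-m)

noncomputable def radialProfileDeriv (t : ℝ) : ℝ :=
  c * t ^ (c - 1) * (a + b * t ^ s) ^ (-m)
    - m * s * b * (t ^ (c + s - 1) * (a + b * t ^ s) ^ (-(m + 1)))

noncomputable def radialProfileDeriv2 (t : ℝ) : ℝ :=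
  c * (c - 1) * t ^ (c - 2) * (a + b * t ^ s) ^ (-m)
    - m * s * b * (2 * c + s - 1) * (t ^ (c + s - 2) * (a + b * t ^ s) ^ (-(m + 1)))
    + m * (m + 1) * s ^ 2 * b ^ 2 * (t ^ (c + 2 * s - 2) * (a + b * t ^ s) ^ (-(m + 2)))

variable {a b s c m}

theorem rpow_eq_radialProfile_sq {r : ℝ} (hr : 0 ≤ r) (p : ℝ) :
    r ^ (-p) * (a + b * r ^ (2 * s)) ^ (-m) = radialProfile a b s (-p / 2) m (r ^ 2) := by
  rw [radialProfile, ← Real.rpow_natCast, ← Real.rpow_mul hr, ← Real.rpow_mul hr]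
  norm_num [mul_div_cancel₀]

theorem hasDerivAt_const_add_mul_rpow {t : ℝ} (ht : 0 < t) :
    HasDerivAt (fun u => a + b * u ^ s) (b * (s * t ^ (s - 1))) t :=
  ((Real.hasDerivAt_rpow_const (Or.inl ht.ne')).const_mul b).const_add a

theorem hasDerivAt_radialProfile {t : ℝ} (ht : 0 < t) (hG : a + b * t ^ s ≠ 0) :
    HasDerivAt (radialProfile a b s c m) (radialProfileDeriv a b s c m t) t := by
  have h := (Real.hasDerivAt_rpow_const (p := c) (Or.inl ht.ne')).mul
    ((hasDerivAt_const_add_mul_rpow ht).rpow_const (p := -m) (Or.inl hG))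
  refine h.congr_deriv ?_
  rw [radialProfileDeriv, show c + s - 1 = c + (s - 1) by ring, Real.rpow_add ht,
    show -(m + 1) = -m - 1 by ring]
  ring

theorem hasDerivAt_radialProfileDeriv {t : ℝ} (ht : 0 < t) (hG : a + b * t ^ s ≠ 0) :
    HasDerivAt (radialProfileDeriv a b s c m) (radialProfileDeriv2 a b s c m t) t := by
  have hG' := hasDerivAt_const_add_mul_rpow (a := a) (b := b) (s := s) ht
  have h := (((Real.hasDerivAt_rpow_const (p := c - 1) (Or.inl ht.ne')).const_mul c).mul
    (hG'.rpow_const (p := -m) (Or.inl hG))).sub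
    (((Real.hasDerivAt_rpow_const (p := c + s - 1) (Or.inl ht.ne')).mul
      (hG'.rpow_const (p := -(m + 1)) (Or.inl hG))).const_mul (m * s * b))
  refine h.congr_deriv ?_
  rw [radialProfileDeriv2, show c - 2 = c - 1 - 1 by ring,
    show c + s - 2 = c + s - 1 - 1 by ring,
    show t ^ (c + 2 * s - 2) = t ^ (c + s - 1) * t ^ (s - 1) by
      rw [← Real.rpow_add ht]; ring_nf,
    show t ^ (c + s - 1 - 1) = t ^ (c - 1) * t ^ (s - 1) by
      rw [← Real.rpow_add ht]; ring_nf,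
    show (-(m + 2) : ℝ) = -(m + 1) - 1 by ring, show -(m + 1) = -m - 1 by ring]
  ring

theorem radialProfile_ode (n lam q e : ℝ) {w : ℝ} (hw : 0 < w) (hG : 0 < a + b * w ^ s)
    (hc : 4 * c ^ 2 - 4 * c + 2 * n * c + lam = 0) (hs : 2 * n + 8 * c + 4 * s - 4 = 0)
    (hb : 4 * (m * (m + 1) * s ^ 2) * b ^ 2 = 1) (hm : m * q = m + 2)
    (he : e + c * q = c + 2 * s - 1) :
    -(2 * n * radialProfileDeriv a b s c m w + 4 * w * radialProfileDeriv2 a b s c m w)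
      - lam / w * radialProfile a b s c m w + w ^ e * radialProfile a b s c m w ^ q = 0 := by
  unfold radialProfile radialProfileDeriv radialProfileDeriv2
  set G := a + b * w ^ s
  have hX : 0 < w ^ c := Real.rpow_pos_of_pos hw c
  have hY : 0 < G ^ (-m) := Real.rpow_pos_of_pos hG _
  have e1 : w ^ (c - 1) = w ^ c / w := by
    rw [Real.rpow_sub hw, Real.rpow_one]
  have e2 : w ^ (c - 2) = w ^ c / w / w := by
    rw [show c - 2 = c - 1 - 1 by ring, Real.rpow_sub hw, Real.rpow_sub hw, Real.rpow_one]
  have e3 : w ^ (c + s - 1) = w ^ c * w ^ s / w := by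
    rw [Real.rpow_sub hw, Real.rpow_add hw, Real.rpow_one]
  have e4 : w ^ (c + s - 2) = w ^ c * w ^ s / w / w := by
    rw [show c + s - 2 = c + s - 1 - 1 by ring, Real.rpow_sub hw, Real.rpow_sub hw,
      Real.rpow_add hw, Real.rpow_one]
  have e5 : w ^ (c + 2 * s - 2) = w ^ c * w ^ s * w ^ s / w / w := by
    rw [show c + 2 * s - 2 = c + s + s - 1 - 1 by ring, Real.rpow_sub hw, Real.rpow_sub hw,
      Real.rpow_add hw, Real.rpow_add hw, Real.rpow_one]
  have f1 : G ^ (-(m + 1)) = G ^ (-m) / G := by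
    rw [show -(m + 1) = -m - 1 by ring, Real.rpow_sub hG, Real.rpow_one]
  have f2 : G ^ (-(m + 2)) = G ^ (-m) / G / G := by
    rw [show -(m + 2) = -m - 1 - 1 by ring, Real.rpow_sub hG, Real.rpow_sub hG, Real.rpow_one]
  have hnonlin : w ^ e * (w ^ c * G ^ (-m)) ^ q = w ^ c * w ^ s * w ^ s / w * (G ^ (-m) / G / G) := by
    rw [Real.mul_rpow hX.le hY.le, ← Real.rpow_mul hw.le, ← Real.rpow_mul hG.le, ← mul_assoc,
      ← Real.rpow_add hw, he, show -m * q = -(m + 2) by linear_combination -hm,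
      show c + 2 * s - 1 = c + s + s - 1 by ring, Real.rpow_sub hw, Real.rpow_add hw,
      Real.rpow_add hw, Real.rpow_one, f2]
  rw [e1, e2, e3, e4, e5, f1, f2, hnonlin]
  have hw1 : w * w⁻¹ = 1 := mul_inv_cancel₀ hw.ne'
  set X := w ^ c
  set T := w ^ s
  set Y := G ^ (-m)
  linear_combination (-(X * Y * w⁻¹)) * hc + (m * s * b * X * T * Y * w⁻¹ * G⁻¹) * hs
    - (X * T * T * Y * w⁻¹ * G⁻¹ * G⁻¹) * hb
    + (-4 * c * (c - 1) * X * Y * w⁻¹ + 4 * m * s * b * (2 * c + s - 1) * X * T * Y * w⁻¹ * G⁻¹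
        - 4 * (m * (m + 1) * s ^ 2 * b ^ 2) * X * T * T * Y * w⁻¹ * G⁻¹ * G⁻¹) * hw1

end RadialProfile

section Bubble

variable {n q lam s pp θ Θ ℓ : ℝ}

theorem bubble_ell_eq (hq : 1 < q) (hs2 : s ^ 2 = (n - 2) ^ 2 / 4 - lam)
    (hpp : pp = (n - 2) / 2 + s) (hθ : θ = (pp * (q - 1) - 2) + 4 * s)
    (hΘ : Θ = (θ + 2) / (q - 1)) (hℓ : ℓ = Θ ^ 2 - (n - 2) * Θ + lam) :
    ℓ = 8 * s ^ 2 * (q + 1) / (q - 1) ^ 2 := by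
  have hq1 : q - 1 ≠ 0 := by linarith
  rw [hℓ, hΘ, hθ, hpp]
  field_simp
  linear_combination 4 * (q - 1) ^ 2 * hs2

theorem bubble_ode {a b c m w : ℝ} (hq : 1 < q) (hs2 : s ^ 2 = (n - 2) ^ 2 / 4 - lam)
    (hpp : pp = (n - 2) / 2 + s) (hθ : θ = (pp * (q - 1) - 2) + 4 * s)
    (hΘ : Θ = (θ + 2) / (q - 1)) (hℓ : ℓ = Θ ^ 2 - (n - 2) * Θ + lam)
    (hb : ℓ * b ^ 2 = 1) (hc : c = -pp / 2) (hm : m = 2 / (q - 1))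
    (hw : 0 < w) (hG : 0 < a + b * w ^ s) :
    -(2 * n * radialProfileDeriv a b s c m w + 4 * w * radialProfileDeriv2 a b s c m w)
      - lam / w * radialProfile a b s c m w + w ^ (θ / 2) * radialProfile a b s c m w ^ q = 0 := by
  have hq1 : q - 1 ≠ 0 := by linarith
  refine radialProfile_ode n lam q (θ / 2) hw hG ?_ ?_ ?_ ?_ ?_
  · rw [hc, hpp]; linear_combination hs2
  · rw [hc, hpp]; ring
  · have hℓm : 4 * (m * (m + 1) * s ^ 2) = ℓ := by
      rw [bubble_ell_eq hq hs2 hpp hθ hΘ hℓ, hm]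
      field_simp
      ring
    rw [hℓm, hb]
  · rw [hm]; field_simp; ring
  · rw [hc, hθ]; ring

end Bubble

theorem stmt_9_general (N : ℕ) (q lam : ℝ) (hq : 1 < q)
    (hlam : lam < ((N : ℝ) - 2) ^ 2 / 4)
    (s pp θ Θ ℓ : ℝ) (hs : s = Real.sqrt (((N : ℝ) - 2) ^ 2 / 4 - lam))
    (hpp : pp = ((N : ℝ) - 2) / 2 + s)
    (hθ : θ = (pp * (q - 1) - 2) + 4 * s)
    (hΘ : Θ = (θ + 2) / (q - 1)) (hℓ : ℓ = Θ ^ 2 - ((N : ℝ) - 2) * Θ + lam) :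
    ∀ μ : ℝ, 0 < μ → ∀ x : EuclideanSpace ℝ (Fin N), x ≠ 0 →
      0 < ‖x‖ ^ (-pp) * (μ ^ (-2 * s) + ℓ ^ (-(1 : ℝ) / 2) * ‖x‖ ^ (2 * s)) ^ (-2 / (q - 1)) ∧
      -lap (fun y => ‖y‖ ^ (-pp) * (μ ^ (-2 * s) + ℓ ^ (-(1 : ℝ) / 2) * ‖y‖ ^ (2 * s)) ^ (-2 / (q - 1))) x
        - lam / ‖x‖ ^ 2 * (‖x‖ ^ (-pp) * (μ ^ (-2 * s) + ℓ ^ (-(1 : ℝ) / 2) * ‖x‖ ^ (2 * s)) ^ (-2 / (q - 1)))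
        + ‖x‖ ^ θ * (‖x‖ ^ (-pp) * (μ ^ (-2 * s) + ℓ ^ (-(1 : ℝ) / 2) * ‖x‖ ^ (2 * s)) ^ (-2 / (q - 1))) ^ q
        = 0 := by
  intro μ hμ x hx
  have hs0 : 0 < s := hs ▸ Real.sqrt_pos.mpr (by linarith)
  have hs2 : s ^ 2 = ((N : ℝ) - 2) ^ 2 / 4 - lam := hs ▸ Real.sq_sqrt (by linarith)
  have hℓ0 : 0 < ℓ := by rw [bubble_ell_eq hq hs2 hpp hθ hΘ hℓ]; positivity
  have hG : ∀ t : ℝ, 0 < t → 0 < μ ^ (-2 * s) + ℓ ^ (-(1 : ℝ) / 2) * t ^ s := by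
    intro t ht; positivity
  have hx2 : 0 < ‖x‖ ^ 2 := by positivity
  set φ := radialProfile (μ ^ (-2 * s)) (ℓ ^ (-(1 : ℝ) / 2)) s (-pp / 2) (2 / (q - 1))
  have hu : ∀ y : EuclideanSpace ℝ (Fin N),
      ‖y‖ ^ (-pp) * (μ ^ (-2 * s) + ℓ ^ (-(1 : ℝ) / 2) * ‖y‖ ^ (2 * s)) ^ (-2 / (q - 1))
        = φ (‖y‖ ^ 2) :=
    fun y => by rw [neg_div (q - 1) 2]; exact rpow_eq_radialProfile_sq (norm_nonneg y) pp
  have hlap := lap_comp_norm_sq (φ := φ)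
    (eventually_of_mem (Ioi_mem_nhds hx2) fun t ht => hasDerivAt_radialProfile ht (hG t ht).ne')
    (hasDerivAt_radialProfileDeriv hx2 (hG _ hx2).ne')
  have hb : ℓ * (ℓ ^ (-(1 : ℝ) / 2)) ^ 2 = 1 := by
    rw [← Real.rpow_natCast, ← Real.rpow_mul hℓ0.le]
    norm_num [Real.rpow_neg_one, hℓ0.ne']
  have hθ2 : ‖x‖ ^ θ = (‖x‖ ^ 2) ^ (θ / 2) := by
    rw [← Real.rpow_natCast, ← Real.rpow_mul (norm_nonneg x)]
    congr 1
    push_cast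
    ring
  refine ⟨by positivity, ?_⟩
  simp only [hu]
  rw [hlap, hθ2]
  linear_combination bubble_ode hq hs2 hpp hθ hΘ hℓ hb rfl rfl hx2 (hG _ hx2)

theorem stmt_9 (N : ℕ) (hN : 3 ≤ N) (q lam : ℝ) (hq : 1 < q)
    (hlam : lam < ((N : ℝ) - 2) ^ 2 / 4)
    (s pp θ Θ ℓ : ℝ) (hs : s = Real.sqrt (((N : ℝ) - 2) ^ 2 / 4 - lam))
    (hpp : pp = ((N : ℝ) - 2) / 2 + s)
    (hθ : θ = (pp * (q - 1) - 2) + 4 * s)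
    (hΘ : Θ = (θ + 2) / (q - 1)) (hℓ : ℓ = Θ ^ 2 - ((N : ℝ) - 2) * Θ + lam) :
    ∀ μ : ℝ, 0 < μ → ∀ x : EuclideanSpace ℝ (Fin N), x ≠ 0 →
      0 < ‖x‖ ^ (-pp) * (μ ^ (-2 * s) + ℓ ^ (-(1 : ℝ) / 2) * ‖x‖ ^ (2 * s)) ^ (-2 / (q - 1)) ∧
      -lap (fun y => ‖y‖ ^ (-pp) * (μ ^ (-2 * s) + ℓ ^ (-(1 : ℝ) / 2) * ‖y‖ ^ (2 * s)) ^ (-2 / (q - 1))) x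
        - lam / ‖x‖ ^ 2 * (‖x‖ ^ (-pp) * (μ ^ (-2 * s) + ℓ ^ (-(1 : ℝ) / 2) * ‖x‖ ^ (2 * s)) ^ (-2 / (q - 1)))
        + ‖x‖ ^ θ * (‖x‖ ^ (-pp) * (μ ^ (-2 * s) + ℓ ^ (-(1 : ℝ) / 2) * ‖x‖ ^ (2 * s)) ^ (-2 / (q - 1))) ^ q
        = 0 :=
  stmt_9_general N q lam hq hlam s pp θ Θ ℓ hs hpp hθ hΘ hℓ
end

section
/- Let $N\geq3$, $q>1$, and suppose either ($\lambda>(N-2)^2/4$ and $\theta\in\mathbb{R}$) or ($\lambda\leq(N-2)^2/4$ and $\theta<p_-(q-1)-2$ where $p_-=\frac{N-2}{2}-\sqrt{(N-2)^2/4-\lambda}$). Set $\Theta=(\theta+2)/(q-1)$ and $\ell=\Theta^2-(N-2)\Theta+\lambda>0$. Then there exist $\alpha\in(0,1)$ and $c_\alpha>0$, depending only on $N,q,\theta,\lambda$, such that for every $c\in(0,c_\alpha)$ and every $\delta>0$, the function $w_\delta(x)=c\,\ell^{1/(q-1)}|x|^{-\Theta}\left[1-(\delta/|x|)^\alpha\right]^{1/\sqrt{\alpha}}$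 satisfies $-\Delta w_\delta-\lambda|x|^{-2}w_\delta+|x|^\theta w_\delta^q\leq 0$ for every $|x|>\delta$. -/
open scoped BigOperators

/-!
Write `r = ‖x‖`, `s = (δ / r) ^ α`, `B = 1 - s`, `β = 1 / √α` and `C = c ℓ ^ (1 / (q - 1))`, so that
`w = C r ^ (-Θ) B ^ β` is radial. The radial Laplacian `f'' + (N - 1) f' / r` and the scaling
`Θ (q - 1) = θ + 2` give
`-Δw - λ w / r² + r ^ θ w ^ q = C r ^ (-Θ - 2) (c ^ (q - 1) ℓ B ^ (β q) - B ^ (β - 2) Q)` with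
`Q = ℓ B² + √α (N - 2 - 2Θ - α) s B + α (1 - √α) s²`. As `B ^ (β q) ≤ B ^ β = B ^ (β - 2) B²`, it
suffices that `Q - c ^ (q - 1) ℓ B² ≥ 0` for `B, s ≥ 0`. If `λ > (N - 2)² / 4`, the discriminant of
this quadratic form tends to `(N - 2 - 2Θ)² - 4ℓ = (N - 2)² - 4λ < 0` as `α, c → 0`. Otherwise the
bound on `θ` gives `Θ < p₋ ≤ (N - 2) / 2`, and all coefficients are nonnegative once
`α ≤ N - 2 - 2Θ`.
-/

open Set Filter Topology
open scoped InnerProductSpace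

section NormSq

variable {F : Type*} [NormedAddCommGroup F] [InnerProductSpace ℝ F]
  {g g' g'' : ℝ → ℝ} {U : Set ℝ}

theorem hasFDerivAt_comp_norm_sq {y : F} {d : ℝ} (hg : HasDerivAt g d (‖y‖ ^ 2)) :
    HasFDerivAt (fun z => g (‖z‖ ^ 2)) (d • (2 • innerSL ℝ y)) y :=
  hg.comp_hasFDerivAt y (hasStrictFDerivAt_norm_sq y).hasFDerivAt

theorem fderiv_fderiv_comp_norm_sq_apply (hU : IsOpen U)
    (hg : ∀ t ∈ U, HasDerivAt g (g' t) t) (hg' : ∀ t ∈ U, HasDerivAt g' (g'' t) t)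
    {x : F} (hx : ‖x‖ ^ 2 ∈ U) (e : F) :
    fderiv ℝ (fun y => fderiv ℝ (fun z => g (‖z‖ ^ 2)) y e) x e
      = 4 * ⟪x, e⟫_ℝ ^ 2 * g'' (‖x‖ ^ 2) + 2 * ‖e‖ ^ 2 * g' (‖x‖ ^ 2) := by
  have hnhds : ∀ᶠ y in 𝓝 x, ‖y‖ ^ 2 ∈ U :=
    (hU.preimage (by fun_prop)).mem_nhds hx
  have hfirst : (fun y => fderiv ℝ (fun z => g (‖z‖ ^ 2)) y e)
      =ᶠ[𝓝 x] fun y => g' (‖y‖ ^ 2) * (2 * innerSL ℝ e y) := by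
    filter_upwards [hnhds] with y hy
    rw [(hasFDerivAt_comp_norm_sq (hg _ hy)).fderiv]
    simp [real_inner_comm]
  have hsecond : HasFDerivAt (fun y => g' (‖y‖ ^ 2) * (2 * innerSL ℝ e y)) _ x :=
    (hasFDerivAt_comp_norm_sq (hg' _ hx)).mul ((innerSL ℝ e).hasFDerivAt.const_mul 2)
  rw [hfirst.fderiv_eq, hsecond.fderiv]
  simp [real_inner_comm]
  ring

end NormSq

theorem lap_comp_norm_sq_s11 {N : ℕ} {g g' g'' : ℝ → ℝ} {U : Set ℝ} (hU : IsOpen U)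
    (hg : ∀ t ∈ U, HasDerivAt g (g' t) t) (hg' : ∀ t ∈ U, HasDerivAt g' (g'' t) t)
    {x : EuclideanSpace ℝ (Fin N)} (hx : ‖x‖ ^ 2 ∈ U) :
    lap (fun y => g (‖y‖ ^ 2)) x = 4 * ‖x‖ ^ 2 * g'' (‖x‖ ^ 2) + 2 * N * g' (‖x‖ ^ 2) := by
  simp only [lap, fderiv_fderiv_comp_norm_sq_apply hU hg hg' hx, Finset.sum_add_distrib,
    ← Finset.sum_mul, ← Finset.mul_sum, EuclideanSpace.inner_single_right, PiLp.norm_single,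
    norm_one, one_pow, one_mul, mul_one, Finset.sum_const, Finset.card_univ, Fintype.card_fin,
    nsmul_eq_mul, Real.ringHom_apply, ← EuclideanSpace.real_norm_sq_eq]
  ring

theorem lap_radial {N : ℕ} {f f' f'' : ℝ → ℝ} {U : Set ℝ} (hU : IsOpen U) (hU0 : U ⊆ Ioi 0)
    (hf : ∀ r ∈ U, HasDerivAt f (f' r) r) (hf' : ∀ r ∈ U, HasDerivAt f' (f'' r) r)
    {x : EuclideanSpace ℝ (Fin N)} (hx : ‖x‖ ∈ U) :
    lap (fun y => f ‖y‖) x = f'' ‖x‖ + (N - 1) / ‖x‖ * f' ‖x‖ := by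
  -- `f ‖y‖ = (f ∘ √) (‖y‖ ^ 2)`, and `‖·‖ ^ 2` is smooth
  have hV : IsOpen (Ioi 0 ∩ Real.sqrt ⁻¹' U) := isOpen_Ioi.inter (hU.preimage Real.continuous_sqrt)
  have hsqrt : ∀ t ∈ Ioi 0 ∩ Real.sqrt ⁻¹' U, HasDerivAt Real.sqrt (1 / (2 * √t)) t :=
    fun t ht => Real.hasDerivAt_sqrt (ne_of_gt ht.1)
  have hx0 : 0 < ‖x‖ := hU0 hx
  have hxV : ‖x‖ ^ 2 ∈ Ioi 0 ∩ Real.sqrt ⁻¹' U :=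
    ⟨pow_pos hx0 2, by simpa [Real.sqrt_sq hx0.le] using hx⟩
  have hsqrt2 : ∀ t ∈ Ioi 0 ∩ Real.sqrt ⁻¹' U, HasDerivAt (fun t => 2 * √t) (1 / √t) t :=
    fun t ht => ((hsqrt t ht).const_mul 2).congr_deriv (by field_simp)
  have key := lap_comp_norm_sq_s11 (N := N) hV
    (fun t ht => ((hf _ ht.2).comp t (hsqrt t ht)).congr_deriv (by ring : _ = f' √t / (2 * √t)))
    (fun t ht => ((hf' _ ht.2).comp t (hsqrt t ht)).div (hsqrt2 t ht)
      (by have := Real.sqrt_pos.2 ht.1; positivity)) hxV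
  simp only [Function.comp_apply, Real.sqrt_sq, norm_nonneg] at key
  rw [key]
  field_simp
  ring

noncomputable def profile (A m a b r : ℝ) : ℝ := r ^ a * (1 - A * r ^ (-m)) ^ b

noncomputable def profileDeriv (A m a b r : ℝ) : ℝ :=
  a * profile A m (a - 1) b r + A * m * b * profile A m (a - m - 1) (b - 1) r

section Profile

variable {A m a b r : ℝ}

theorem hasDerivAt_profile (hr : 0 < r) (hB : 1 - A * r ^ (-m) ≠ 0) :
    HasDerivAt (profile A m a b) (profileDeriv A m a b r) r := by
  have hpow : HasDerivAt (fun u : ℝ => u ^ a) (a * r ^ (a - 1)) r :=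
    Real.hasDerivAt_rpow_const (Or.inl hr.ne')
  have hbase : HasDerivAt (fun u : ℝ => 1 - A * u ^ (-m)) (A * m * r ^ (-m - 1)) r :=
    ((Real.hasDerivAt_rpow_const (p := -m) (Or.inl hr.ne')).const_mul A).const_sub 1
      |>.congr_deriv (by ring)
  refine (hpow.mul (hbase.rpow_const (p := b) (Or.inl hB))).congr_deriv ?_
  have hsplit : r ^ a * r ^ (-m - 1) = r ^ (a - m - 1) := by
    rw [← Real.rpow_add hr]; ring_nf
  simp only [profileDeriv, profile, ← hsplit]
  ring

theorem hasDerivAt_profileDeriv (hr : 0 < r) (hB : 1 - A * r ^ (-m) ≠ 0) :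
    HasDerivAt (profileDeriv A m a b)
      (a * profileDeriv A m (a - 1) b r + A * m * b * profileDeriv A m (a - m - 1) (b - 1) r) r :=
  ((hasDerivAt_profile hr hB).const_mul a).add ((hasDerivAt_profile hr hB).const_mul (A * m * b))

theorem profileDeriv_radial_eq (n : ℝ) (hr : 0 < r) (hB : 0 < 1 - A * r ^ (-m)) :
    (a * profileDeriv A m (a - 1) b r + A * m * b * profileDeriv A m (a - m - 1) (b - 1) r)
        + (n - 1) / r * profileDeriv A m a b r
      = r ^ (a - 2) * (1 - A * r ^ (-m)) ^ (b - 2)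
        * ((a ^ 2 + (n - 2) * a) * (1 - A * r ^ (-m)) ^ 2
          + m * b * (n - 2 + 2 * a - m) * (A * r ^ (-m)) * (1 - A * r ^ (-m))
          + m ^ 2 * b * (b - 1) * (A * r ^ (-m)) ^ 2) := by
  simp only [profileDeriv, profile]
  -- the identity holds with `1 - A * r ^ (-m)` replaced by an independent variable
  generalize 1 - A * r ^ (-m) = B at hB ⊢
  simp only [Real.rpow_neg hr.le, Real.rpow_sub hr, Real.rpow_sub hB, Real.rpow_one, Real.rpow_two]
  field_simp
  ring

end Profile

theorem div_rpow_eq_mul_rpow_neg {δ r : ℝ} (α : ℝ) (hδ : 0 ≤ δ) (hr : 0 ≤ r) :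
    (δ / r) ^ α = δ ^ α * r ^ (-α) := by
  rw [Real.div_rpow hδ hr, Real.rpow_neg hr, div_eq_mul_inv]

theorem lap_rpow_mul_one_sub_rpow {N : ℕ} (C Θ α b : ℝ) {δ : ℝ} (hδ : 0 < δ)
    (hα : 0 < α) {x : EuclideanSpace ℝ (Fin N)} (hx : δ < ‖x‖) :
    lap (fun y => C * ‖y‖ ^ (-Θ) * (1 - (δ / ‖y‖) ^ α) ^ b) x
      = C * ‖x‖ ^ (-Θ - 2) * (1 - (δ / ‖x‖) ^ α) ^ (b - 2)
        * ((Θ ^ 2 - ((N : ℝ) - 2) * Θ) * (1 - (δ / ‖x‖) ^ α) ^ 2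
          + α * b * ((N : ℝ) - 2 - 2 * Θ - α) * (δ / ‖x‖) ^ α * (1 - (δ / ‖x‖) ^ α)
          + α ^ 2 * b * (b - 1) * ((δ / ‖x‖) ^ α) ^ 2) := by
  have hbase : ∀ r ∈ Ioi δ, 0 < 1 - δ ^ α * r ^ (-α) := fun r (hr : δ < r) => by
    rw [← div_rpow_eq_mul_rpow_neg α hδ.le (hδ.trans hr).le, sub_pos]
    exact Real.rpow_lt_one (div_pos hδ (hδ.trans hr)).le ((div_lt_one (hδ.trans hr)).2 hr) hα
  have hf : ∀ r ∈ Ioi δ, HasDerivAt (fun r => C * r ^ (-Θ) * (1 - (δ / r) ^ α) ^ b)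
      (C * profileDeriv (δ ^ α) α (-Θ) b r) r := fun r (hr : δ < r) => by
    have hr0 : 0 < r := hδ.trans hr
    refine ((hasDerivAt_profile hr0 (hbase r hr).ne').const_mul C).congr_of_eventuallyEq ?_
    filter_upwards [lt_mem_nhds hr0] with y hy
    rw [div_rpow_eq_mul_rpow_neg α hδ.le hy.le, profile, mul_assoc]
  have hf' : ∀ r ∈ Ioi δ, HasDerivAt (fun r => C * profileDeriv (δ ^ α) α (-Θ) b r)
      (C * (-Θ * profileDeriv (δ ^ α) α (-Θ - 1) b r
        + δ ^ α * α * b * profileDeriv (δ ^ α) α (-Θ - α - 1) (b - 1) r)) r :=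
    fun r (hr : δ < r) => (hasDerivAt_profileDeriv (hδ.trans hr) (hbase r hr).ne').const_mul C
  have hx0 : 0 < ‖x‖ := hδ.trans hx
  have hid := profileDeriv_radial_eq (a := -Θ) (b := b) N hx0 (hbase _ hx)
  rw [lap_radial isOpen_Ioi (Ioi_subset_Ioi hδ.le) hf hf' hx,
    div_rpow_eq_mul_rpow_neg α hδ.le hx0.le]
  linear_combination C * hid

theorem rpow_mul_mul_rpow_eq {q θ Θ ℓ c r X : ℝ} (hq : 1 < q) (hΘ : Θ = (θ + 2) / (q - 1))
    (hℓ : 0 < ℓ) (hc : 0 < c) (hr : 0 < r) (hX : 0 ≤ X) :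
    r ^ θ * (c * ℓ ^ (1 / (q - 1)) * r ^ (-Θ) * X) ^ q
      = c ^ (q - 1) * ℓ * (c * ℓ ^ (1 / (q - 1))) * r ^ (-Θ - 2) * X ^ q := by
  have hq1 : q - 1 ≠ 0 := by linarith
  have hC : (c * ℓ ^ (1 / (q - 1))) ^ q = c ^ (q - 1) * ℓ * (c * ℓ ^ (1 / (q - 1))) := by
    have hC0 : c * ℓ ^ (1 / (q - 1)) ≠ 0 := by positivity
    calc (c * ℓ ^ (1 / (q - 1))) ^ q = (c * ℓ ^ (1 / (q - 1))) ^ (q - 1 + 1) := by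
          rw [sub_add_cancel]
      _ = c ^ (q - 1) * ℓ * (c * ℓ ^ (1 / (q - 1))) := by
          rw [Real.rpow_add_one hC0, Real.mul_rpow hc.le (by positivity), ← Real.rpow_mul hℓ.le,
            one_div_mul_cancel hq1, Real.rpow_one]
  have hexp : θ + -Θ * q = -Θ - 2 := by
    rw [hΘ]; field_simp; ring
  rw [Real.mul_rpow (by positivity) hX, Real.mul_rpow (by positivity) (by positivity), hC,
    ← Real.rpow_mul hr.le, ← hexp, Real.rpow_add hr]
  ring

theorem quadratic_nonneg_of_sq_le {a k c : ℝ} (ha : 0 ≤ a) (hc : 0 ≤ c) (h : k ^ 2 ≤ 4 * a * c)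
    (x y : ℝ) : 0 ≤ a * x ^ 2 + k * y * x + c * y ^ 2 := by
  rcases ha.eq_or_lt with rfl | ha
  · obtain rfl : k = 0 := by nlinarith
    simp only [zero_mul, add_zero, zero_add]; positivity
  · nlinarith [sq_nonneg (2 * a * x + k * y), mul_nonneg (sub_nonneg.2 h) (sq_nonneg y)]

theorem exists_quadratic_nonneg_of_sq_lt {K ℓ : ℝ} (hℓ : 0 < ℓ) (hK : K ^ 2 < 4 * ℓ) :
    ∃ α ∈ Ioo (0 : ℝ) 1, ∃ κ > 0, ∀ κ' < κ, ∀ B s : ℝ, 0 ≤ B → 0 ≤ s →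
      0 ≤ (1 - κ') * ℓ * B ^ 2 + √α * (K - α) * s * B + α * (1 - √α) * s ^ 2 := by
  have hnear : ∀ᶠ α in 𝓝[>] 0, (K - α) ^ 2 < 4 * ℓ * (1 - √α) ∧ α ∈ Ioo 0 1 := by
    refine ((ContinuousAt.eventually_lt (by fun_prop) (by fun_prop) ?_).filter_mono
      nhdsWithin_le_nhds).and (Ioo_mem_nhdsGT one_pos)
    simpa using hK
  obtain ⟨α, hdisc, hα⟩ := hnear.exists
  have hsqrt : √α < 1 := by rw [Real.sqrt_lt' one_pos, one_pow]; exact hα.2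
  have hR : 0 < 4 * ℓ * (1 - √α) := by nlinarith
  -- at `κ' = κ` the discriminant `α (K - α) ^ 2 - 4 (1 - κ') ℓ α (1 - √α)` vanishes
  refine ⟨α, hα, 1 - (K - α) ^ 2 / (4 * ℓ * (1 - √α)), ?_, fun κ hκ B s _ _ => ?_⟩
  · rw [gt_iff_lt, sub_pos, div_lt_one hR]; exact hdisc
  have hκ1 : κ < 1 := hκ.trans_le (sub_le_self _ (by positivity))
  have hκ' : (K - α) ^ 2 < 4 * ((1 - κ) * ℓ) * (1 - √α) := by
    rw [lt_sub_comm, div_lt_iff₀ hR] at hκ; linarith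
  refine quadratic_nonneg_of_sq_le ?_ ?_ ?_ B s
  · exact mul_nonneg (by linarith) hℓ.le
  · exact mul_nonneg hα.1.le (by linarith)
  · rw [mul_pow, Real.sq_sqrt hα.1.le]; nlinarith [hα.1]

theorem exists_quadratic_nonneg_of_pos {K ℓ : ℝ} (hℓ : 0 < ℓ) (hK : 0 < K) :
    ∃ α ∈ Ioo (0 : ℝ) 1, ∃ κ > 0, ∀ κ' < κ, ∀ B s : ℝ, 0 ≤ B → 0 ≤ s →
      0 ≤ (1 - κ') * ℓ * B ^ 2 + √α * (K - α) * s * B + α * (1 - √α) * s ^ 2 := by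
  set α := min (1 / 2) K
  have hα : α ∈ Ioo 0 1 := ⟨lt_min one_half_pos hK, (min_le_left _ _).trans_lt one_half_lt_one⟩
  have hsqrt : √α ≤ 1 := Real.sqrt_le_one.mpr hα.2.le
  refine ⟨α, hα, 1, one_pos, fun κ hκ B s hB hs => ?_⟩
  have hαK : 0 ≤ K - α := sub_nonneg.2 (min_le_right _ _)
  have hB2 := mul_nonneg (mul_nonneg (sub_nonneg.2 hκ.le) hℓ.le) (sq_nonneg B)
  have hsB := mul_nonneg (mul_nonneg (mul_nonneg (Real.sqrt_nonneg α) hαK) hs) hB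
  have hs2 := mul_nonneg (mul_nonneg hα.1.le (sub_nonneg.2 hsqrt)) (sq_nonneg s)
  linarith

theorem sq_lt_four_mul_or_pos {N : ℕ} {q θ lam Θ ℓ : ℝ} (hq : 1 < q)
    (hcase : ((N : ℝ) - 2) ^ 2 / 4 < lam ∨
      θ < (((N : ℝ) - 2) / 2 - √(((N : ℝ) - 2) ^ 2 / 4 - lam)) * (q - 1) - 2)
    (hΘ : Θ = (θ + 2) / (q - 1)) (hℓ : ℓ = Θ ^ 2 - ((N : ℝ) - 2) * Θ + lam) :
    ((N : ℝ) - 2 - 2 * Θ) ^ 2 < 4 * ℓ ∨ 0 < (N : ℝ) - 2 - 2 * Θ := by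
  rcases hcase with hlam | hθ
  · left; rw [hℓ]; linarith
  · right
    have hΘlt : Θ < ((N : ℝ) - 2) / 2 - √(((N : ℝ) - 2) ^ 2 / 4 - lam) := by
      rw [hΘ, div_lt_iff₀ (by linarith)]; linarith
    linarith [Real.sqrt_nonneg (((N : ℝ) - 2) ^ 2 / 4 - lam)]

theorem neg_lap_sub_add_rpow_nonpos {N : ℕ} {q θ lam Θ ℓ α c δ : ℝ} (hq : 1 < q)
    (hΘ : Θ = (θ + 2) / (q - 1)) (hℓ : ℓ = Θ ^ 2 - ((N : ℝ) - 2) * Θ + lam) (hℓpos : 0 < ℓ)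
    (hα : α ∈ Ioo (0 : ℝ) 1) (hc : 0 < c) (hδ : 0 < δ)
    (hquad : ∀ B s : ℝ, 0 ≤ B → 0 ≤ s → 0 ≤ (1 - c ^ (q - 1)) * ℓ * B ^ 2
      + √α * ((N : ℝ) - 2 - 2 * Θ - α) * s * B + α * (1 - √α) * s ^ 2)
    {x : EuclideanSpace ℝ (Fin N)} (hx : δ < ‖x‖) :
    -lap (fun y => c * ℓ ^ (1 / (q - 1)) * ‖y‖ ^ (-Θ)
          * (1 - (δ / ‖y‖) ^ α) ^ (1 / Real.sqrt α)) x
      - lam / ‖x‖ ^ 2 * (c * ℓ ^ (1 / (q - 1)) * ‖x‖ ^ (-Θ)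
          * (1 - (δ / ‖x‖) ^ α) ^ (1 / Real.sqrt α))
      + ‖x‖ ^ θ * (c * ℓ ^ (1 / (q - 1)) * ‖x‖ ^ (-Θ)
          * (1 - (δ / ‖x‖) ^ α) ^ (1 / Real.sqrt α)) ^ q ≤ 0 := by
  have hr : 0 < ‖x‖ := hδ.trans hx
  have hs : 0 < (δ / ‖x‖) ^ α := by positivity
  have hB : 0 < 1 - (δ / ‖x‖) ^ α :=
    sub_pos.2 (Real.rpow_lt_one (by positivity) ((div_lt_one hr).2 hx) hα.1)
  rw [lap_rpow_mul_one_sub_rpow _ _ _ _ hδ hα.1 hx,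
    rpow_mul_mul_rpow_eq hq hΘ hℓpos hc hr (by positivity)]
  set C := c * ℓ ^ (1 / (q - 1))
  set s := (δ / ‖x‖) ^ α
  set B := 1 - s
  have hsqrt : 0 < √α := Real.sqrt_pos.2 hα.1
  have hsq : √α ^ 2 = α := Real.sq_sqrt hα.1.le
  have hαβ : α * (1 / √α) = √α := by
    field_simp; exact hsq.symm
  have hαββ : α ^ 2 * (1 / √α) * (1 / √α - 1) = α * (1 - √α) := by
    field_simp; linear_combination (α * √α - α) * hsq
  set β := 1 / √α
  have hBβ : B ^ β = B ^ (β - 2) * B ^ 2 := by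
    rw [← Real.rpow_natCast, ← Real.rpow_add hB]; norm_num
  have hrΘ : ‖x‖ ^ (-Θ) = ‖x‖ ^ (-Θ - 2) * ‖x‖ ^ 2 := by
    rw [← Real.rpow_natCast, ← Real.rpow_add hr]; norm_num
  have hreact : (B ^ β) ^ q ≤ B ^ β := Real.rpow_le_self_of_le_one (by positivity)
    (Real.rpow_le_one hB.le (sub_le_self _ hs.le) (by positivity)) hq.le
  rw [hαβ, hαββ, hrΘ]
  calc _ = -(C * ‖x‖ ^ (-Θ - 2) * B ^ (β - 2)) * ((1 - c ^ (q - 1)) * ℓ * B ^ 2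
          + √α * ((N : ℝ) - 2 - 2 * Θ - α) * s * B + α * (1 - √α) * s ^ 2)
        + c ^ (q - 1) * ℓ * C * ‖x‖ ^ (-Θ - 2) * ((B ^ β) ^ q - B ^ β) := by
        rw [hBβ, hℓ]; field_simp; ring
    _ ≤ 0 := add_nonpos (mul_nonpos_of_nonpos_of_nonneg (by simp only [neg_nonpos]; positivity)
        (hquad B s hB.le hs.le)) (mul_nonpos_of_nonneg_of_nonpos (by positivity)
        (sub_nonpos.2 hreact))

theorem stmt_11_general (N : ℕ) (q θ lam : ℝ) (hq : 1 < q)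
    (hcase : ((N : ℝ) - 2) ^ 2 / 4 < lam ∨
      (lam ≤ ((N : ℝ) - 2) ^ 2 / 4 ∧
        θ < (((N : ℝ) - 2) / 2 - Real.sqrt (((N : ℝ) - 2) ^ 2 / 4 - lam)) * (q - 1) - 2))
    (Θ ℓ : ℝ) (hΘ : Θ = (θ + 2) / (q - 1))
    (hℓ : ℓ = Θ ^ 2 - ((N : ℝ) - 2) * Θ + lam) (hℓpos : 0 < ℓ) :
    ∃ α ∈ Set.Ioo (0 : ℝ) 1, ∃ cα : ℝ, 0 < cα ∧
      ∀ c ∈ Set.Ioo (0 : ℝ) cα, ∀ δ : ℝ, 0 < δ →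
        ∀ x : EuclideanSpace ℝ (Fin N), δ < ‖x‖ →
          -lap (fun y => c * ℓ ^ (1 / (q - 1)) * ‖y‖ ^ (-Θ)
                * (1 - (δ / ‖y‖) ^ α) ^ (1 / Real.sqrt α)) x
            - lam / ‖x‖ ^ 2 * (c * ℓ ^ (1 / (q - 1)) * ‖x‖ ^ (-Θ)
                * (1 - (δ / ‖x‖) ^ α) ^ (1 / Real.sqrt α))
            + ‖x‖ ^ θ * (c * ℓ ^ (1 / (q - 1)) * ‖x‖ ^ (-Θ)
                * (1 - (δ / ‖x‖) ^ α) ^ (1 / Real.sqrt α)) ^ q ≤ 0 := by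
  obtain ⟨α, hα, κ, hκ, hquad⟩ := (sq_lt_four_mul_or_pos hq (hcase.imp_right And.right) hΘ hℓ).elim
    (exists_quadratic_nonneg_of_sq_lt hℓpos) (exists_quadratic_nonneg_of_pos hℓpos)
  have hq1 : 0 < q - 1 := sub_pos.2 hq
  refine ⟨α, hα, κ ^ (q - 1)⁻¹, by positivity, fun c hc δ hδ x hx => ?_⟩
  have hcκ : c ^ (q - 1) < κ := by
    simpa [Real.rpow_inv_rpow hκ.le hq1.ne'] using
      Real.rpow_lt_rpow hc.1.le hc.2 hq1
  exact neg_lap_sub_add_rpow_nonpos hq hΘ hℓ hℓpos hα hc.1 hδ (hquad _ hcκ) hx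

theorem stmt_11 (N : ℕ) (hN : 3 ≤ N) (q θ lam : ℝ) (hq : 1 < q)
    (hcase : ((N : ℝ) - 2) ^ 2 / 4 < lam ∨
      (lam ≤ ((N : ℝ) - 2) ^ 2 / 4 ∧
        θ < (((N : ℝ) - 2) / 2 - Real.sqrt (((N : ℝ) - 2) ^ 2 / 4 - lam)) * (q - 1) - 2))
    (Θ ℓ : ℝ) (hΘ : Θ = (θ + 2) / (q - 1))
    (hℓ : ℓ = Θ ^ 2 - ((N : ℝ) - 2) * Θ + lam) (hℓpos : 0 < ℓ) :
    ∃ α ∈ Set.Ioo (0 : ℝ) 1, ∃ cα : ℝ, 0 < cα ∧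
      ∀ c ∈ Set.Ioo (0 : ℝ) cα, ∀ δ : ℝ, 0 < δ →
        ∀ x : EuclideanSpace ℝ (Fin N), δ < ‖x‖ →
          -lap (fun y => c * ℓ ^ (1 / (q - 1)) * ‖y‖ ^ (-Θ)
                * (1 - (δ / ‖y‖) ^ α) ^ (1 / Real.sqrt α)) x
            - lam / ‖x‖ ^ 2 * (c * ℓ ^ (1 / (q - 1)) * ‖x‖ ^ (-Θ)
                * (1 - (δ / ‖x‖) ^ α) ^ (1 / Real.sqrt α))
            + ‖x‖ ^ θ * (c * ℓ ^ (1 / (q - 1)) * ‖x‖ ^ (-Θ)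
                * (1 - (δ / ‖x‖) ^ α) ^ (1 / Real.sqrt α)) ^ q ≤ 0 :=
  stmt_11_general N q θ lam hq hcase Θ ℓ hΘ hℓ hℓpos
end

section
/- Let $\ell>0$, $q>1$, $N\geq 3$ and $\Theta\in\mathbb{R}$ with $N-2-2\Theta>0$. For $\alpha\in(0,1)$ define $A_\alpha=1-\frac{\sqrt{\alpha}}{\ell}(N-2-2\Theta-\sqrt{\alpha})$ and $B_\alpha=-2+\frac{\sqrt{\alpha}}{\ell}(N-2-2\Theta-\alpha)$, and suppose additionally $(N-2-2\Theta)^2>4\ell$ (so that $B_\alpha^2-4A_\alpha>0$ for small $\alpha$). Then for all sufficiently small $\alpha>0$: $A_\alpha>0$, $A_\alpha+B_\alpha+1=\frac{\alpha}{\ell}(1-\sqrt{\alpha})>0$, and $A_\alpha t^2+B_\alpha t+1>0$ for every $t\in[0,1]$. -/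
theorem stmt_12 (ℓ q : ℝ) (N : ℕ) (Θ : ℝ) (hℓ : 0 < ℓ) (hq : 1 < q) (hN : 3 ≤ N)
    (hΘ : 0 < (N : ℝ) - 2 - 2 * Θ) (hdisc : 4 * ℓ < ((N : ℝ) - 2 - 2 * Θ) ^ 2) :
    ∃ α₀ : ℝ, 0 < α₀ ∧ α₀ ≤ 1 ∧ ∀ α : ℝ, 0 < α → α < α₀ →
      (0 < 1 - Real.sqrt α / ℓ * ((N : ℝ) - 2 - 2 * Θ - Real.sqrt α)) ∧
      ((1 - Real.sqrt α / ℓ * ((N : ℝ) - 2 - 2 * Θ - Real.sqrt α))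
          + (-2 + Real.sqrt α / ℓ * ((N : ℝ) - 2 - 2 * Θ - α)) + 1
        = α / ℓ * (1 - Real.sqrt α)) ∧
      (0 < α / ℓ * (1 - Real.sqrt α)) ∧
      ∀ t ∈ Set.Icc (0 : ℝ) 1,
        0 < (1 - Real.sqrt α / ℓ * ((N : ℝ) - 2 - 2 * Θ - Real.sqrt α)) * t ^ 2
          + (-2 + Real.sqrt α / ℓ * ((N : ℝ) - 2 - 2 * Θ - α)) * t + 1 := by
  set M : ℝ := (N : ℝ) - 2 - 2 * Θ with hMdef
  have hM : 0 < M := hΘ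
  clear hMdef
  clear_value M
  refine ⟨min 1 (min ((ℓ / M) ^ 2) (M ^ 2)), by positivity, min_le_left _ _, ?_⟩
  intro α hα hαlt
  have hα1 : α < 1 := lt_of_lt_of_le hαlt (min_le_left _ _)
  have hα2 : α < (ℓ / M) ^ 2 :=
    lt_of_lt_of_le hαlt (le_trans (min_le_right _ _) (min_le_left _ _))
  have hα3 : α < M ^ 2 :=
    lt_of_lt_of_le hαlt (le_trans (min_le_right _ _) (min_le_right _ _))
  set s := Real.sqrt α with hsdef
  have hs0 : 0 < s := Real.sqrt_pos.mpr hα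
  have hss : s * s = α := Real.mul_self_sqrt hα.le
  clear hαlt hsdef
  clear_value s
  have hs1 : s < 1 := by nlinarith
  have hsM : s < M := by nlinarith
  have hsl : s * M < ℓ := by
    have h : s < ℓ / M := by nlinarith [sq_nonneg (s - ℓ / M), div_pos hℓ hM]
    calc s * M < (ℓ / M) * M := by nlinarith
    _ = ℓ := by field_simp
  have hA : 0 < 1 - s / ℓ * (M - s) := by
    rw [div_mul_eq_mul_div, lt_sub_iff_add_lt, ← sub_pos]
    have : s * (M - s) < ℓ := by nlinarith
    have := (div_lt_one hℓ).mpr this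
    linarith
  refine ⟨hA, ?_, ?_, ?_⟩
  · linear_combination hss / ℓ
  · exact mul_pos (div_pos hα hℓ) (by linarith)
  · rintro t ⟨ht0, ht1⟩
    have hsα : α < s := by nlinarith
    have key : (1 - s / ℓ * (M - s)) * t ^ 2 + (-2 + s / ℓ * (M - α)) * t + 1
        = (1 - t) ^ 2 + (s / ℓ) * t * ((M - α) - (M - s) * t) := by ring
    rw [key]
    have h1 : s - α ≤ (M - α) - (M - s) * t := by nlinarith
    have hq1 : 0 ≤ (s / ℓ) * t := by positivity
    rcases eq_or_lt_of_le ht1 with h | h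
    · have : (s / ℓ) * t * ((M - α) - (M - s) * t) > 0 := by
        apply mul_pos
        · rw [h, mul_one]; positivity
        · nlinarith
      nlinarith [sq_nonneg (1 - t)]
    · have h2 : 0 < (1 - t) ^ 2 := pow_pos (by linarith) 2
      have h3 : 0 ≤ s - α := by linarith
      linarith [mul_nonneg hq1 (le_trans h3 h1)]
end

section
/- Let $N\geq3$, $q>1$, $\lambda,\theta\in\mathbb{R}$ satisfy $\ell=\Theta^2-(N-2)\Theta+\lambda>0$, where $\Theta=(\theta+2)/(q-1)$. Fix a suitable $\alpha>0$ small depending only on $N,q,\theta,\lambda$, and let $\nu>0$. For $\varepsilon\in(0,1)$ there exists $\eta_0>0$ such that for every $\eta\in(0,\eta_0)$ the function $w^-_{\varepsilon,\eta}(x)=(1-\varepsilon)\ell^{1/(q-1)}|x|^{-\Theta}|x|^{\eta}\left(1+\frac{|x|^\alpha}{\nu}\right)^{-1/\sqrt{\alpha}}$ satisfies $-\Delta w^-_{\varepsilon,\eta}-\lambda|x|^{-2}w^-_{\varepsilon,\eta}+|x|^\theta (w^-_{\varepsilon,\eta})^q\leq 0$ in $B_1(0)\setminus\{0\}$. -/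
open scoped BigOperators

/-!
For a radial function `f (‖x‖)` one has `Δ = f'' + (N - 1) f' / r`. The barrier
`w = K r^p (1 + r^α / ν)^(-m)` has logarithmic slope `s = r w' / w = p - m α T` with
`T = r^α / (ν + r^α) ∈ [0, 1]` and `r T' = α T (1 - T)`, so that
`-Δw - λ w / r² + r^θ w^q = (w / r²) [-(s² + (N - 2) s + λ) + m α² T (1 - T) + r^(θ+2) w^(q-1)]`.
Take `α = σ²`, `m = 1 / σ`, `p = η - Θ`. Since `(q - 1) Θ = θ + 2`, the reaction term is
`(1 - ε)^(q-1) ℓ r^((q-1) η) (1 + r^α / ν)^(-m (q-1))`, at most `(1 - ε)^(q-1) ℓ (1 - T)` once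
`σ ≤ q - 1`. Expanding around `-Θ`, the bracket is then negative as soon as
`σ (|N - 2 - 2Θ| + 1) ≤ ℓ / 2` (a choice independent of `ε`) and `η |N - 2 - 2Θ|` is at most
`(1 - (1 - ε)^(q-1)) ℓ / 2`.
-/

open Filter Topology

theorem hasFDerivAt_norm {E : Type*} [NormedAddCommGroup E] [InnerProductSpace ℝ E] {x : E}
    (hx : x ≠ 0) : HasFDerivAt (‖·‖) (‖x‖⁻¹ • innerSL ℝ x) x := by
  have hx' : 0 < ‖x‖ := norm_pos_iff.2 hx
  convert (hasStrictFDerivAt_norm_sq x).hasFDerivAt.sqrt (by positivity) using 1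
  · simp [Real.sqrt_sq (norm_nonneg _)]
  · ext v
    simp [Real.sqrt_sq hx'.le]
    ring

theorem lap_congr {N : ℕ} {u v : EuclideanSpace ℝ (Fin N) → ℝ} {x : EuclideanSpace ℝ (Fin N)}
    (h : u =ᶠ[𝓝 x] v) : lap u x = lap v x := by
  unfold lap
  refine Finset.sum_congr rfl fun i _ => ?_
  rw [Filter.EventuallyEq.fderiv_eq]
  filter_upwards [h.eventuallyEq_nhds] with y hy
  rw [hy.fderiv_eq]

theorem lap_comp_norm {N : ℕ} {f f' : ℝ → ℝ} {f'' : ℝ} {x : EuclideanSpace ℝ (Fin N)}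
    (hx : x ≠ 0) (hf : ∀ᶠ r in 𝓝 ‖x‖, HasDerivAt f (f' r) r)
    (hf' : HasDerivAt f' f'' ‖x‖) :
    lap (fun y => f ‖y‖) x = f'' + ((N : ℝ) - 1) / ‖x‖ * f' ‖x‖ := by
  have hx' : 0 < ‖x‖ := norm_pos_iff.2 hx
  have hpartial : ∀ i : Fin N, (fun y => fderiv ℝ (fun y => f ‖y‖) y (EuclideanSpace.single i 1))
      =ᶠ[𝓝 x] fun y => f' ‖y‖ / ‖y‖ * y i := by
    intro i
    filter_upwards [continuous_norm.continuousAt.eventually hf, isOpen_ne.mem_nhds hx]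
      with y hy hy0
    have h : HasFDerivAt (fun y : EuclideanSpace ℝ (Fin N) => f ‖y‖) _ y :=
      hy.comp_hasFDerivAt y (hasFDerivAt_norm hy0)
    rw [h.fderiv]
    simp [EuclideanSpace.inner_single_right]
    ring
  have hg : HasDerivAt (fun r => f' r / r) ((f'' * ‖x‖ - f' ‖x‖) / ‖x‖ ^ 2) ‖x‖ :=
    (hf'.fun_div (hasDerivAt_id' _) hx'.ne').congr_deriv (by simp)
  have hsecond : ∀ i : Fin N, fderiv ℝ (fun y => f' ‖y‖ / ‖y‖ * y i) x (EuclideanSpace.single i 1)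
      = (f'' * ‖x‖ - f' ‖x‖) / ‖x‖ ^ 3 * x i ^ 2 + f' ‖x‖ / ‖x‖ := by
    intro i
    have h : HasFDerivAt (fun y : EuclideanSpace ℝ (Fin N) => f' ‖y‖ / ‖y‖ * y i) _ x :=
      (hg.comp_hasFDerivAt x (hasFDerivAt_norm hx)).mul
        (EuclideanSpace.proj (𝕜 := ℝ) i).hasFDerivAt
    rw [h.fderiv]
    simp [EuclideanSpace.inner_single_right]
    field_simp
    ring
  have hsum : ∑ i, x i ^ 2 = ‖x‖ ^ 2 := by
    rw [EuclideanSpace.norm_eq, Real.sq_sqrt (by positivity)]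
    simp [sq_abs]
  unfold lap
  rw [Finset.sum_congr rfl fun i _ => by rw [(hpartial i).fderiv_eq, hsecond],
    Finset.sum_add_distrib, ← Finset.mul_sum, hsum, Finset.sum_const, Finset.card_univ,
    Fintype.card_fin, nsmul_eq_mul]
  field_simp
  ring

namespace Barrier

noncomputable def profile (K p α ν m r : ℝ) : ℝ := K * r ^ p * (1 + r ^ α / ν) ^ (-m)

noncomputable def correctionRatio (α ν r : ℝ) : ℝ := r ^ α / (ν + r ^ α)

noncomputable def logSlope (p m α ν r : ℝ) : ℝ := p - m * α * correctionRatio α ν r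

variable {K p α ν m r : ℝ}

theorem correctionRatio_nonneg (hν : 0 ≤ ν) (hr : 0 ≤ r) : 0 ≤ correctionRatio α ν r := by
  unfold correctionRatio; positivity

theorem correctionRatio_le_one (hν : 0 ≤ ν) (hr : 0 ≤ r) : correctionRatio α ν r ≤ 1 :=
  div_le_one_of_le₀ (le_add_of_nonneg_left hν) (by positivity)

theorem one_sub_correctionRatio (hν : 0 < ν) (hr : 0 ≤ r) :
    1 - correctionRatio α ν r = (1 + r ^ α / ν)⁻¹ := by
  have : 0 ≤ r ^ α := Real.rpow_nonneg hr α
  unfold correctionRatio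
  field_simp
  ring

theorem hasDerivAt_correctionRatio (hν : 0 < ν) (hr : 0 < r) :
    HasDerivAt (correctionRatio α ν)
      (α * correctionRatio α ν r * (1 - correctionRatio α ν r) / r) r := by
  have hrα : 0 < r ^ α := Real.rpow_pos_of_pos hr α
  have h := Real.hasDerivAt_rpow_const (p := α) (Or.inl hr.ne')
  have hq := h.fun_div (h.const_add ν) (by positivity)
  unfold correctionRatio
  refine hq.congr_deriv ?_
  rw [Real.rpow_sub_one hr.ne']
  field_simp

theorem hasDerivAt_profile (hν : 0 < ν) (hr : 0 < r) :
    HasDerivAt (profile K p α ν m) (profile K p α ν m r * logSlope p m α ν r / r) r := by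
  have hrα : 0 < r ^ α := Real.rpow_pos_of_pos hr α
  have hG : 0 < 1 + r ^ α / ν := by positivity
  have hpow := Real.hasDerivAt_rpow_const (p := p) (Or.inl hr.ne')
  have hcorr := (((Real.hasDerivAt_rpow_const (p := α) (Or.inl hr.ne')).div_const ν).const_add
    1).rpow_const (p := -m) (Or.inl hG.ne')
  refine ((hpow.const_mul K).mul hcorr).congr_deriv ?_
  unfold profile logSlope correctionRatio
  rw [Real.rpow_sub_one hr.ne', Real.rpow_sub_one hr.ne', Real.rpow_sub_one hG.ne']
  field_simp
  ring

theorem hasDerivAt_profile_mul_logSlope_div (hν : 0 < ν) (hr : 0 < r) :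
    HasDerivAt (fun r => profile K p α ν m r * logSlope p m α ν r / r)
      (profile K p α ν m r / r ^ 2 * (logSlope p m α ν r ^ 2 - logSlope p m α ν r
        - m * α ^ 2 * correctionRatio α ν r * (1 - correctionRatio α ν r))) r := by
  have hslope : HasDerivAt (logSlope p m α ν)
      (-(m * α * (α * correctionRatio α ν r * (1 - correctionRatio α ν r) / r))) r :=
    ((hasDerivAt_correctionRatio (α := α) hν hr).const_mul (m * α)).const_sub p
  refine (((hasDerivAt_profile hν hr).fun_mul hslope).fun_div (hasDerivAt_id' r)
    hr.ne').congr_deriv ?_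
  field_simp
  ring

theorem lap_profile_comp_norm {N : ℕ} {x : EuclideanSpace ℝ (Fin N)} (hν : 0 < ν) (hx : x ≠ 0) :
    lap (fun y => profile K p α ν m ‖y‖) x = profile K p α ν m ‖x‖ / ‖x‖ ^ 2 *
      (logSlope p m α ν ‖x‖ ^ 2 + ((N : ℝ) - 2) * logSlope p m α ν ‖x‖
        - m * α ^ 2 * correctionRatio α ν ‖x‖ * (1 - correctionRatio α ν ‖x‖)) := by
  have hx' : 0 < ‖x‖ := norm_pos_iff.2 hx
  rw [lap_comp_norm hx ((eventually_gt_nhds hx').mono fun r hr => hasDerivAt_profile hν hr)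
    (hasDerivAt_profile_mul_logSlope_div hν hx')]
  field_simp
  ring

theorem rpow_mul_profile_rpow_le {q θ Θ ℓ ε η : ℝ} (hq : 1 < q) (hΘ : Θ = (θ + 2) / (q - 1))
    (hℓ : 0 ≤ ℓ) (hε : ε ≤ 1) (hη : 0 ≤ η) (hm : 1 ≤ m * (q - 1)) (hν : 0 < ν) (hr0 : 0 < r)
    (hr1 : r ≤ 1) :
    r ^ (θ + 2) * profile ((1 - ε) * ℓ ^ (1 / (q - 1))) (η - Θ) α ν m r ^ (q - 1)
      ≤ (1 - ε) ^ (q - 1) * ℓ * (1 - correctionRatio α ν r) := by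
  have hq1 : 0 < q - 1 := sub_pos.2 hq
  have hG : 1 ≤ 1 + r ^ α / ν := le_add_of_nonneg_right (by positivity)
  have hK : ((1 - ε) * ℓ ^ (1 / (q - 1))) ^ (q - 1) = (1 - ε) ^ (q - 1) * ℓ := by
    rw [Real.mul_rpow (by linarith) (by positivity), ← Real.rpow_mul hℓ,
      one_div_mul_cancel hq1.ne', Real.rpow_one]
  have hexp : (θ + 2) + (η - Θ) * (q - 1) = η * (q - 1) := by
    rw [hΘ]; field_simp; ring
  have hdecay : r ^ (η * (q - 1)) ≤ 1 := Real.rpow_le_one hr0.le hr1 (by positivity)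
  have hcorr : (1 + r ^ α / ν) ^ (-(m * (q - 1))) ≤ 1 - correctionRatio α ν r := by
    rw [one_sub_correctionRatio hν hr0.le, ← Real.rpow_neg_one]
    exact Real.rpow_le_rpow_of_exponent_le hG (by linarith)
  unfold profile
  rw [Real.mul_rpow (by positivity) (by positivity), Real.mul_rpow (by positivity) (by positivity),
    hK, ← Real.rpow_mul hr0.le, ← Real.rpow_mul (by positivity)]
  calc r ^ (θ + 2) * ((1 - ε) ^ (q - 1) * ℓ * r ^ ((η - Θ) * (q - 1))
        * (1 + r ^ α / ν) ^ (-m * (q - 1)))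
      = (1 - ε) ^ (q - 1) * ℓ * (r ^ (η * (q - 1)) * (1 + r ^ α / ν) ^ (-(m * (q - 1)))) := by
        rw [← hexp, Real.rpow_add hr0 (θ + 2), neg_mul]; ring
    _ ≤ (1 - ε) ^ (q - 1) * ℓ * (1 - correctionRatio α ν r) := by
        gcongr
        exact (mul_le_of_le_one_left (by positivity) hdecay).trans hcorr

theorem bracket_nonpos {N Θ lam ℓ c η σ T Y : ℝ} (hℓ : ℓ = Θ ^ 2 - (N - 2) * Θ + lam)
    (hℓpos : 0 < ℓ) (hc0 : 0 ≤ c) (hT0 : 0 ≤ T) (hT1 : T ≤ 1) (hσ0 : 0 ≤ σ)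
    (hσ1 : σ ≤ 1) (hη : 0 ≤ η) (hηD : η * |N - 2 - 2 * Θ| ≤ (1 - c) * ℓ / 2)
    (hσD : σ * (|N - 2 - 2 * Θ| + 1) ≤ ℓ / 2) (hY : Y ≤ c * ℓ * (1 - T)) :
    -((η - Θ - σ * T) ^ 2 + (N - 2) * (η - Θ - σ * T) + lam) + σ ^ 3 * T * (1 - T) + Y ≤ 0 := by
  set D := N - 2 - 2 * Θ
  have hc1 : c ≤ 1 := by nlinarith [mul_nonneg hη (abs_nonneg D)]
  have hsplit : (η - Θ - σ * T) ^ 2 + (N - 2) * (η - Θ - σ * T) + lam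
      = ℓ + (η - σ * T) * D + (η - σ * T) ^ 2 := by rw [hℓ]; ring
  have hℓsplit : (1 - c) * ℓ / 2 + ℓ * T / 2 ≤ ℓ - c * ℓ * (1 - T) := by
    nlinarith [mul_nonneg (mul_nonneg (sub_nonneg.2 hc1) (sub_nonneg.2 hT1)) hℓpos.le,
      mul_nonneg (mul_nonneg hc0 hT0) hℓpos.le]
  have hcross : -((η + σ * T) * |D|) ≤ (η - σ * T) * D := by
    have := neg_abs_le ((η - σ * T) * D)
    rw [abs_mul] at this
    nlinarith [abs_sub η (σ * T), abs_of_nonneg hη, abs_of_nonneg (mul_nonneg hσ0 hT0),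
      abs_nonneg D]
  have hcubic : σ ^ 3 * T * (1 - T) ≤ σ * T := by
    have : σ ^ 2 * (1 - T) ≤ 1 := by nlinarith
    nlinarith [mul_nonneg hσ0 hT0]
  nlinarith [sq_nonneg (η - σ * T), mul_nonneg hT0 (sub_nonneg.2 hσD), abs_nonneg D]

theorem profile_subsolution {N : ℕ} {q θ lam Θ ℓ σ ε η : ℝ} (hq : 1 < q)
    (hΘ : Θ = (θ + 2) / (q - 1)) (hℓ : ℓ = Θ ^ 2 - ((N : ℝ) - 2) * Θ + lam) (hℓpos : 0 < ℓ)
    (hσ0 : 0 < σ) (hσ1 : σ ≤ 1) (hσq : σ ≤ q - 1)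
    (hσD : σ * (|(N : ℝ) - 2 - 2 * Θ| + 1) ≤ ℓ / 2) (hν : 0 < ν) (hε : ε < 1) (hη : 0 ≤ η)
    (hηD : η * |(N : ℝ) - 2 - 2 * Θ| ≤ (1 - (1 - ε) ^ (q - 1)) * ℓ / 2)
    {x : EuclideanSpace ℝ (Fin N)} (hx0 : 0 < ‖x‖) (hx1 : ‖x‖ < 1) :
    -lap (fun y => profile ((1 - ε) * ℓ ^ (1 / (q - 1))) (η - Θ) (σ ^ 2) ν (1 / σ) ‖y‖) x
      - lam / ‖x‖ ^ 2 * profile ((1 - ε) * ℓ ^ (1 / (q - 1))) (η - Θ) (σ ^ 2) ν (1 / σ) ‖x‖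
      + ‖x‖ ^ θ * profile ((1 - ε) * ℓ ^ (1 / (q - 1))) (η - Θ) (σ ^ 2) ν (1 / σ) ‖x‖ ^ q
      ≤ 0 := by
  set w := profile ((1 - ε) * ℓ ^ (1 / (q - 1))) (η - Θ) (σ ^ 2) ν (1 / σ)
  rw [lap_profile_comp_norm hν (norm_pos_iff.1 hx0)]
  set r := ‖x‖
  set T := correctionRatio (σ ^ 2) ν r
  have hw0 : 0 < w r := by
    have : 0 < 1 - ε := sub_pos.2 hε
    unfold w profile; positivity
  have hslope : logSlope (η - Θ) (1 / σ) (σ ^ 2) ν r = η - Θ - σ * T := by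
    unfold logSlope; field_simp; ring
  have hcube : 1 / σ * (σ ^ 2) ^ 2 = σ ^ 3 := by field_simp
  have hreaction : r ^ θ * w r ^ q = w r / r ^ 2 * (r ^ (θ + 2) * w r ^ (q - 1)) := by
    rw [Real.rpow_add hx0, Real.rpow_sub_one hw0.ne', Real.rpow_two]
    field_simp
  have hY := rpow_mul_profile_rpow_le (α := σ ^ 2) hq hΘ hℓpos.le hε.le hη
    (by rwa [one_div_mul_eq_div, le_div_iff₀ hσ0, one_mul]) hν hx0 hx1.le
  have hbracket := bracket_nonpos hℓ hℓpos (Real.rpow_nonneg (by linarith) _)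
    (correctionRatio_nonneg hν.le hx0.le)
    (correctionRatio_le_one hν.le hx0.le) hσ0.le hσ1 hη hηD hσD hY
  rw [hslope, hcube, hreaction]
  calc _ = w r / r ^ 2 * (-((η - Θ - σ * T) ^ 2 + ((N : ℝ) - 2) * (η - Θ - σ * T) + lam)
        + σ ^ 3 * T * (1 - T) + r ^ (θ + 2) * w r ^ (q - 1)) := by
        field_simp
        ring
    _ ≤ 0 := mul_nonpos_of_nonneg_of_nonpos (by positivity) hbracket

end Barrier

theorem stmt_15_general (N : ℕ) (q θ lam : ℝ) (hq : 1 < q)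
    (Θ ℓ : ℝ) (hΘ : Θ = (θ + 2) / (q - 1))
    (hℓ : ℓ = Θ ^ 2 - ((N : ℝ) - 2) * Θ + lam) (hℓpos : 0 < ℓ) :
    ∃ α : ℝ, 0 < α ∧ ∀ ν : ℝ, 0 < ν → ∀ ε ∈ Set.Ioo (0 : ℝ) 1,
      ∃ η₀ : ℝ, 0 < η₀ ∧ ∀ η ∈ Set.Ioo (0 : ℝ) η₀,
        ∀ x : EuclideanSpace ℝ (Fin N), 0 < ‖x‖ → ‖x‖ < 1 →
          -lap (fun y => (1 - ε) * ℓ ^ (1 / (q - 1)) * ‖y‖ ^ (-Θ) * ‖y‖ ^ η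
                * (1 + ‖y‖ ^ α / ν) ^ (-(1 / Real.sqrt α))) x
            - lam / ‖x‖ ^ 2 * ((1 - ε) * ℓ ^ (1 / (q - 1)) * ‖x‖ ^ (-Θ) * ‖x‖ ^ η
                * (1 + ‖x‖ ^ α / ν) ^ (-(1 / Real.sqrt α)))
            + ‖x‖ ^ θ * ((1 - ε) * ℓ ^ (1 / (q - 1)) * ‖x‖ ^ (-Θ) * ‖x‖ ^ η
                * (1 + ‖x‖ ^ α / ν) ^ (-(1 / Real.sqrt α))) ^ q ≤ 0 := by
  set D := |(N : ℝ) - 2 - 2 * Θ|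
  have hq1 : 0 < q - 1 := sub_pos.2 hq
  set σ := min 1 (min (q - 1) (ℓ / (2 * (D + 1))))
  have hσ0 : 0 < σ := lt_min one_pos (lt_min hq1 (by positivity))
  have hσD : σ * (D + 1) ≤ ℓ / 2 := by
    have := (le_div_iff₀ (by positivity)).1 ((min_le_right _ _).trans (min_le_right _ _) :
      σ ≤ ℓ / (2 * (D + 1)))
    linarith
  refine ⟨σ ^ 2, by positivity, fun ν hν ε hε => ?_⟩
  set c := (1 - ε) ^ (q - 1)
  have hc1 : c < 1 := Real.rpow_lt_one (by linarith [hε.2]) (by linarith [hε.1]) hq1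
  refine ⟨(1 - c) * ℓ / (2 * (D + 1)), by have := sub_pos.2 hc1; positivity,
    fun η hη x hx0 hx1 => ?_⟩
  have hηD : η * D ≤ (1 - c) * ℓ / 2 := by
    have := (lt_div_iff₀ (by positivity)).1 hη.2
    nlinarith [abs_nonneg ((N : ℝ) - 2 - 2 * Θ), hη.1]
  have hprofile : (fun y : EuclideanSpace ℝ (Fin N) => (1 - ε) * ℓ ^ (1 / (q - 1)) * ‖y‖ ^ (-Θ)
        * ‖y‖ ^ η * (1 + ‖y‖ ^ (σ ^ 2) / ν) ^ (-(1 / σ)))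
      =ᶠ[𝓝 x] fun y =>
        Barrier.profile ((1 - ε) * ℓ ^ (1 / (q - 1))) (η - Θ) (σ ^ 2) ν (1 / σ) ‖y‖ := by
    filter_upwards [continuous_norm.continuousAt.eventually (eventually_gt_nhds hx0)] with y hy
    rw [Barrier.profile, sub_eq_neg_add η, Real.rpow_add hy, mul_assoc _ (‖y‖ ^ (-Θ))]
  rw [Real.sqrt_sq hσ0.le, lap_congr hprofile, hprofile.eq_of_nhds]
  exact Barrier.profile_subsolution hq hΘ hℓ hℓpos hσ0 (min_le_left _ _)
    ((min_le_right _ _).trans (min_le_left _ _)) hσD hν hε.2 hη.1.le hηD hx0 hx1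

theorem stmt_15 (N : ℕ) (hN : 3 ≤ N) (q θ lam : ℝ) (hq : 1 < q)
    (Θ ℓ : ℝ) (hΘ : Θ = (θ + 2) / (q - 1))
    (hℓ : ℓ = Θ ^ 2 - ((N : ℝ) - 2) * Θ + lam) (hℓpos : 0 < ℓ) :
    ∃ α : ℝ, 0 < α ∧ ∀ ν : ℝ, 0 < ν → ∀ ε ∈ Set.Ioo (0 : ℝ) 1,
      ∃ η₀ : ℝ, 0 < η₀ ∧ ∀ η ∈ Set.Ioo (0 : ℝ) η₀,
        ∀ x : EuclideanSpace ℝ (Fin N), 0 < ‖x‖ → ‖x‖ < 1 →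
          -lap (fun y => (1 - ε) * ℓ ^ (1 / (q - 1)) * ‖y‖ ^ (-Θ) * ‖y‖ ^ η
                * (1 + ‖y‖ ^ α / ν) ^ (-(1 / Real.sqrt α))) x
            - lam / ‖x‖ ^ 2 * ((1 - ε) * ℓ ^ (1 / (q - 1)) * ‖x‖ ^ (-Θ) * ‖x‖ ^ η
                * (1 + ‖x‖ ^ α / ν) ^ (-(1 / Real.sqrt α)))
            + ‖x‖ ^ θ * ((1 - ε) * ℓ ^ (1 / (q - 1)) * ‖x‖ ^ (-Θ) * ‖x‖ ^ η
                * (1 + ‖x‖ ^ α / ν) ^ (-(1 / Real.sqrt α))) ^ q ≤ 0 :=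
  stmt_15_general N q θ lam hq Θ ℓ hΘ hℓ hℓpos
end

section
/- Let $N\geq3$, $a,b,q\in\mathbb{R}$ with $q>1$, and let $v$ be a $C^2$ positive function on $\mathbb{R}^N\setminus\{0\}$. Define the generalized Kelvin transform $\widehat{v}(x)=|x|^{2-N+2a}v(x/|x|^2)$ and $\widehat{b}=(N-2-2a)q-(N+2a+b+2)$. If $v$ solves $\mathrm{div}(|x|^{-2a}\nabla v)+d|x|^{-2(1+a)}v=|x|^{b}v^q$ in $\mathbb{R}^N\setminus\{0\}$, then $\widehat{v}$ solves the same equation with $b$ replaced by $\widehat{b}$, i.e., $\mathrm{div}(|x|^{-2a}\nabla \widehat{v})+d|x|^{-2(1+a)}\widehat{v}=|x|^{\widehat{b}}\widehat{v}^q$ in $\mathbb{R}^N\setminus\{0\}$. -/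
open scoped BigOperators

/-!
Write `ι x = x / |x|²` and `K u = |x|^γ · (u ∘ ι)` with `γ = 2 - N + 2a`, and let
`L u = div(|x|^{-2a} ∇u) + d |x|^{-2(1+a)} u`. The product rule for the Laplacian, together with
`Δ|x|^γ = γ(γ+N-2)|x|^{γ-2}` and `Δ(u ∘ ι)(x) = |x|^{-4} Δu(ιx) - 2(N-2)|x|^{-2} ⟪ιx, ∇u(ιx)⟫`,
shows that for this particular `γ` the first-order terms recombine into the weighted ones, so that
`L(K u)(x) = |x|^{-(N+2+2a)} (L u)(ιx)`. Substituting the equation for `v` at `ιx` and collecting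
the powers of `|x|` produces the exponent `b̂`.
-/

open Topology Filter InnerProductSpace

theorem hasFDerivAt_fderiv_of_contDiffAt {G H : Type*} [NormedAddCommGroup G] [NormedSpace ℝ G]
    [NormedAddCommGroup H] [NormedSpace ℝ H] {u : G → H} {x : G} (hu : ContDiffAt ℝ 2 u x) :
    HasFDerivAt (fderiv ℝ u) (fderiv ℝ (fderiv ℝ u) x) x :=
  ((hu.fderiv_right (m := 1) le_rfl).differentiableAt one_ne_zero).hasFDerivAt

section InnerProductSpace

variable {F : Type*} [NormedAddCommGroup F] [InnerProductSpace ℝ F]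

theorem hasFDerivAt_norm_rpow_of_ne_zero {x : F} (hx : x ≠ 0) (p : ℝ) :
    HasFDerivAt (fun y : F => ‖y‖ ^ p) ((p * ‖x‖ ^ (p - 2)) • innerSL ℝ x) x := by
  convert ((hasStrictFDerivAt_norm_sq x).rpow_const (p := p / 2) (by simp [hx])).hasFDerivAt
    using 1
  · ext y
    rw [← Real.rpow_natCast_mul (norm_nonneg _)]
    ring_nf
  · simp_rw [← Real.rpow_natCast_mul (norm_nonneg _), ← Nat.cast_smul_eq_nsmul ℝ, smul_smul]
    ring_nf

theorem gradient_norm_rpow [CompleteSpace F] {x : F} (hx : x ≠ 0) (p : ℝ) :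
    gradient (fun y : F => ‖y‖ ^ p) x = (p * ‖x‖ ^ (p - 2)) • x := by
  refine HasGradientAt.gradient ?_
  rw [hasGradientAt_iff_hasFDerivAt, map_smul]
  exact hasFDerivAt_norm_rpow_of_ne_zero hx p

theorem hasFDerivAt_inv_norm_sq {x : F} (hx : x ≠ 0) :
    HasFDerivAt (fun y : F => (‖y‖ ^ 2)⁻¹) ((-2 * (‖x‖ ^ 2)⁻¹ ^ 2) • innerSL ℝ x) x := by
  refine ((hasDerivAt_inv (by positivity)).comp_hasFDerivAt x
    (hasStrictFDerivAt_norm_sq x).hasFDerivAt).congr_fderiv ?_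
  ext y
  simp
  ring

theorem inner_gradient_mul [CompleteSpace F] {f g : F → ℝ} {x : F}
    (hf : DifferentiableAt ℝ f x) (hg : DifferentiableAt ℝ g x) (w : F) :
    ⟪w, gradient (fun y => f y * g y) x⟫_ℝ
      = f x * ⟪w, gradient g x⟫_ℝ + g x * ⟪w, gradient f x⟫_ℝ := by
  simp only [inner_gradient_right, conj_trivial, fderiv_fun_mul hf hg, add_apply, smul_apply,
    smul_eq_mul]

noncomputable def unitInversion (x : F) : F := (‖x‖ ^ 2)⁻¹ • x

theorem norm_unitInversion (x : F) : ‖unitInversion x‖ = ‖x‖⁻¹ := by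
  rcases eq_or_ne x 0 with rfl | hx
  · simp [unitInversion]
  · rw [unitInversion, norm_smul, norm_inv, norm_pow, norm_norm]
    field_simp

theorem apply_unitInversion (T : F →L[ℝ] ℝ) (x : F) :
    T (unitInversion x) = (‖x‖ ^ 2)⁻¹ * T x :=
  map_smul T _ x

theorem unitInversion_ne_zero {x : F} (hx : x ≠ 0) : unitInversion x ≠ 0 :=
  smul_ne_zero (by positivity) hx

theorem contDiffAt_unitInversion {x : F} (hx : x ≠ 0) {n : WithTop ℕ∞} :
    ContDiffAt ℝ n unitInversion x :=
  ((contDiffAt_id.norm_sq ℝ).inv (by simpa)).smul contDiffAt_id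

theorem hasFDerivAt_unitInversion {x : F} (hx : x ≠ 0) :
    HasFDerivAt unitInversion
      ((‖x‖ ^ 2)⁻¹ • ContinuousLinearMap.id ℝ F
        + ((-2 * (‖x‖ ^ 2)⁻¹ ^ 2) • innerSL ℝ x).smulRight x) x :=
  (hasFDerivAt_inv_norm_sq hx).smul (hasFDerivAt_id x)

theorem hasFDerivAt_comp_unitInversion {v : F → ℝ} {x : F} (hx : x ≠ 0)
    (hv : DifferentiableAt ℝ v (unitInversion x)) :
    HasFDerivAt (fun y => v (unitInversion y))
      ((‖x‖ ^ 2)⁻¹ • fderiv ℝ v (unitInversion x)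
        - (2 * (‖x‖ ^ 2)⁻¹ ^ 2 * fderiv ℝ v (unitInversion x) x) • innerSL ℝ x) x := by
  refine (hv.hasFDerivAt.comp x (hasFDerivAt_unitInversion hx)).congr_fderiv ?_
  ext h
  simp
  ring

theorem inner_gradient_comp_unitInversion [CompleteSpace F] {v : F → ℝ} {x : F} (hx : x ≠ 0)
    (hv : DifferentiableAt ℝ v (unitInversion x)) :
    ⟪x, gradient (fun y => v (unitInversion y)) x⟫_ℝ
      = -⟪unitInversion x, gradient v (unitInversion x)⟫_ℝ := by
  rw [real_inner_comm, inner_gradient_left, real_inner_comm, inner_gradient_left,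
    (hasFDerivAt_comp_unitInversion hx hv).fderiv, apply_unitInversion]
  simp
  field_simp
  ring

noncomputable def kelvin (γ : ℝ) (v : F → ℝ) (y : F) : ℝ := ‖y‖ ^ γ * v (unitInversion y)

end InnerProductSpace

section Euclidean

variable {N : ℕ}

local notation "E" => EuclideanSpace ℝ (Fin N)

open EuclideanSpace (single)

theorem sum_mul_apply_single (x : E) (T : E →L[ℝ] ℝ) : ∑ i, x i * T (single i 1) = T x := by
  conv_rhs => rw [← (EuclideanSpace.basisFun (Fin N) ℝ).sum_repr x]
  simp [map_sum]

theorem sum_mul_self_eq_norm_sq (x : E) : ∑ i, x i * x i = ‖x‖ ^ 2 := by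
  rw [EuclideanSpace.norm_sq_eq]
  simp [sq]

theorem gradient_apply_single (f : E → ℝ) (x : E) (i : Fin N) :
    gradient f x i = fderiv ℝ f x (single i 1) := by
  rw [← inner_gradient_left, EuclideanSpace.inner_single_right]
  simp

theorem inner_gradient_eq_sum (f g : E → ℝ) (x : E) :
    ⟪gradient f x, gradient g x⟫_ℝ
      = ∑ i, fderiv ℝ f x (single i 1) * fderiv ℝ g x (single i 1) := by
  simp_rw [← gradient_apply_single f]
  rw [sum_mul_apply_single, real_inner_comm, inner_gradient_left]

theorem lap_eq_sum_fderiv_fderiv {u : E → ℝ} {x : E} (hu : ContDiffAt ℝ 2 u x) :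
    lap u x = ∑ i, fderiv ℝ (fderiv ℝ u) x (single i 1) (single i 1) := by
  refine Finset.sum_congr rfl fun i _ => ?_
  rw [fderiv_clm_apply (hasFDerivAt_fderiv_of_contDiffAt hu).differentiableAt
    (differentiableAt_const _)]
  simp

theorem lap_mul {f g : E → ℝ} {x : E} (hf : ContDiffAt ℝ 2 f x) (hg : ContDiffAt ℝ 2 g x) :
    lap (fun y => f y * g y) x
      = f x * lap g x + 2 * ⟪gradient f x, gradient g x⟫_ℝ + g x * lap f x := by
  have hD : fderiv ℝ (fun y => f y * g y) =ᶠ[𝓝 x]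
      fun y => f y • fderiv ℝ g y + g y • fderiv ℝ f y := by
    filter_upwards [hf.eventually (by simp), hg.eventually (by simp)] with y hfy hgy
    exact fderiv_fun_mul (hfy.differentiableAt two_ne_zero) (hgy.differentiableAt two_ne_zero)
  have hD' : HasFDerivAt (fun y => f y • fderiv ℝ g y + g y • fderiv ℝ f y) _ x :=
    ((hf.differentiableAt two_ne_zero).hasFDerivAt.smul (hasFDerivAt_fderiv_of_contDiffAt hg)).add
      ((hg.differentiableAt two_ne_zero).hasFDerivAt.smul (hasFDerivAt_fderiv_of_contDiffAt hf))
  rw [lap_eq_sum_fderiv_fderiv (hf.mul hg), hD.fderiv_eq, hD'.fderiv,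
    lap_eq_sum_fderiv_fderiv hf, lap_eq_sum_fderiv_fderiv hg, inner_gradient_eq_sum,
    Finset.mul_sum, Finset.mul_sum, Finset.mul_sum, ← Finset.sum_add_distrib,
    ← Finset.sum_add_distrib]
  refine Finset.sum_congr rfl fun i _ => ?_
  simp only [add_apply, smul_apply, ContinuousLinearMap.smulRight_apply, smul_eq_mul]
  ring

theorem lap_norm_rpow {x : E} (hx : x ≠ 0) (p : ℝ) :
    lap (fun y : E => ‖y‖ ^ p) x = p * (p + N - 2) * ‖x‖ ^ (p - 2) := by
  have hr : 0 < ‖x‖ := norm_pos_iff.mpr hx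
  have hpartial (i : Fin N) : (fun y => fderiv ℝ (fun y : E => ‖y‖ ^ p) y (single i 1))
      =ᶠ[𝓝 x] fun y => p * ‖y‖ ^ (p - 2) * y i := by
    filter_upwards [isOpen_compl_singleton.mem_nhds hx] with y hy
    simp [(hasFDerivAt_norm_rpow_of_ne_zero hy p).fderiv, EuclideanSpace.inner_single_right]
  have hpartial_deriv (i : Fin N) : HasFDerivAt (fun y : E => p * ‖y‖ ^ (p - 2) * y i) _ x :=
    ((hasFDerivAt_norm_rpow_of_ne_zero hx (p - 2)).const_mul p).mul
      (EuclideanSpace.proj i : E →L[ℝ] ℝ).hasFDerivAt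
  calc lap (fun y : E => ‖y‖ ^ p) x
      = ∑ i : Fin N, (p * (p - 2) * ‖x‖ ^ (p - 2 - 2) * (x i * x i) + p * ‖x‖ ^ (p - 2)) := by
        refine Finset.sum_congr rfl fun i _ => ?_
        rw [(hpartial i).fderiv_eq, (hpartial_deriv i).fderiv]
        simp [EuclideanSpace.inner_single_right]
        ring
    _ = p * (p + N - 2) * ‖x‖ ^ (p - 2) := by
        rw [Finset.sum_add_distrib, ← Finset.mul_sum, sum_mul_self_eq_norm_sq, Finset.sum_const,
          Finset.card_univ, Fintype.card_fin, nsmul_eq_mul, ← Real.rpow_natCast,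
          mul_assoc, ← Real.rpow_add hr]
        norm_num
        ring

theorem fderiv_comp_unitInversion_single_eventuallyEq {v : E → ℝ} {x : E} (hx : x ≠ 0)
    (hv : ContDiffAt ℝ 2 v (unitInversion x)) (i : Fin N) :
    (fun y => fderiv ℝ (fun y => v (unitInversion y)) y (single i 1))
      =ᶠ[𝓝 x] fun y => (‖y‖ ^ 2)⁻¹ * fderiv ℝ v (unitInversion y) (single i 1)
        - 2 * (‖y‖ ^ 2)⁻¹ ^ 2 * y i * fderiv ℝ v (unitInversion y) y := by
  filter_upwards [isOpen_compl_singleton.mem_nhds hx,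
    (contDiffAt_unitInversion hx (n := 0)).continuousAt.eventually (hv.eventually (by simp))]
    with y hy hvy
  simp [(hasFDerivAt_comp_unitInversion hy (hvy.differentiableAt two_ne_zero)).fderiv,
    EuclideanSpace.inner_single_right]
  ring

theorem lap_comp_unitInversion {v : E → ℝ} {x : E} (hx : x ≠ 0)
    (hv : ContDiffAt ℝ 2 v (unitInversion x)) :
    lap (fun y => v (unitInversion y)) x
      = (‖x‖ ^ 2)⁻¹ ^ 2 * lap v (unitInversion x)
        - 2 * (N - 2) * (‖x‖ ^ 2)⁻¹ * ⟪unitInversion x, gradient v (unitInversion x)⟫_ℝ := by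
  have hDv : HasFDerivAt (fun y => fderiv ℝ v (unitInversion y)) _ x :=
    (hasFDerivAt_fderiv_of_contDiffAt hv).comp x (hasFDerivAt_unitInversion hx)
  have hpartial_deriv (i : Fin N) : HasFDerivAt (fun y => (‖y‖ ^ 2)⁻¹ * fderiv ℝ v (unitInversion y)
      (single i 1) - 2 * (‖y‖ ^ 2)⁻¹ ^ 2 * y i * fderiv ℝ v (unitInversion y) y) _ x :=
    ((hasFDerivAt_inv_norm_sq hx).mul (hDv.clm_apply (hasFDerivAt_const _ _))).sub
      ((((hasFDerivAt_inv_norm_sq hx).pow 2).const_mul 2).mul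
        (EuclideanSpace.proj i : E →L[ℝ] ℝ).hasFDerivAt |>.mul (hDv.clm_apply (hasFDerivAt_id x)))
  rw [lap_eq_sum_fderiv_fderiv hv]
  set P := (‖x‖ ^ 2)⁻¹
  set D := fderiv ℝ v (unitInversion x)
  set H := fderiv ℝ (fderiv ℝ v) (unitInversion x)
  calc lap (fun y => v (unitInversion y)) x
      = ∑ i : Fin N, (P ^ 2 * H (single i 1) (single i 1) - 4 * P ^ 2 * (x i * D (single i 1))
          - 2 * P ^ 3 * (x i * H x (single i 1)) - 2 * P ^ 3 * (x i * H.flip x (single i 1))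
          + (4 * P ^ 4 * H x x + 8 * P ^ 3 * D x) * (x i * x i) - 2 * P ^ 2 * D x) := by
        refine Finset.sum_congr rfl fun i _ => ?_
        rw [(fderiv_comp_unitInversion_single_eventuallyEq hx hv i).fderiv_eq,
          (hpartial_deriv i).fderiv]
        simp [EuclideanSpace.inner_single_right]
        ring
    _ = P ^ 2 * ∑ i : Fin N, H (single i 1) (single i 1) - 4 * P ^ 2 * D x - 4 * P ^ 3 * H x x
          + (4 * P ^ 4 * H x x + 8 * P ^ 3 * D x) * ‖x‖ ^ 2 - 2 * N * P ^ 2 * D x := by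
        simp only [Finset.sum_add_distrib, Finset.sum_sub_distrib, ← Finset.mul_sum,
          sum_mul_apply_single, sum_mul_self_eq_norm_sq, Finset.sum_const, Finset.card_univ,
          Fintype.card_fin, nsmul_eq_mul]
        rw [ContinuousLinearMap.flip_apply]
        ring
    _ = _ := by
        -- the second-order radial terms `H x x` cancel, since `P * ‖x‖ ^ 2 = 1`
        have hPx : P * ‖x‖ ^ 2 = 1 := inv_mul_cancel₀ (by positivity)
        rw [real_inner_comm, inner_gradient_left, apply_unitInversion]
        linear_combination (8 * P ^ 2 * D x + 4 * P ^ 3 * H x x) * hPx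

/-- `div(|x|^{-2a} ∇u) + d |x|^{-2(1+a)} u`, with the divergence expanded. -/
noncomputable def hardyOperator (a d : ℝ) (u : E → ℝ) (x : E) : ℝ :=
  ‖x‖ ^ (-2 * a) * lap u x - 2 * a * ‖x‖ ^ (-2 * a - 2) * ⟪x, gradient u x⟫_ℝ
    + d * ‖x‖ ^ (-2 * (1 + a)) * u x

theorem hardyOperator_kelvin {v : E → ℝ} {x : E} (hx : x ≠ 0)
    (hv : ContDiffAt ℝ 2 v (unitInversion x)) (a d : ℝ) :
    hardyOperator a d (kelvin (2 - N + 2 * a) v) x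
      = ‖x‖ ^ (-(N + 2 + 2 * a)) * hardyOperator a d v (unitInversion x) := by
  have hr : 0 < ‖x‖ := norm_pos_iff.mpr hx
  have hF : ContDiffAt ℝ 2 (fun y : E => ‖y‖ ^ (2 - N + 2 * a)) x :=
    (contDiffAt_norm ℝ hx).rpow_const_of_ne hr.ne'
  have hg : ContDiffAt ℝ 2 (fun y => v (unitInversion y)) x :=
    hv.comp x (contDiffAt_unitInversion hx)
  unfold hardyOperator kelvin
  rw [lap_mul hF hg, inner_gradient_mul (hF.differentiableAt two_ne_zero)
      (hg.differentiableAt two_ne_zero), gradient_norm_rpow hx, inner_smul_left, inner_smul_right,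
    inner_gradient_comp_unitInversion hx (hv.differentiableAt two_ne_zero), lap_norm_rpow hx,
    lap_comp_unitInversion hx hv, norm_unitInversion, real_inner_self_eq_norm_sq]
  simp only [conj_trivial, neg_mul, mul_add, Real.rpow_add hr, Real.rpow_sub hr,
    Real.rpow_neg hr.le, Real.inv_rpow hr.le, Real.rpow_natCast, Real.rpow_two, mul_one]
  field_simp
  ring

end Euclidean

theorem stmt_17_general (N : ℕ) (a b d q : ℝ)
    (v : EuclideanSpace ℝ (Fin N) → ℝ) (hv : ContDiffOn ℝ 2 v {0}ᶜ)
    (hpos : ∀ x : EuclideanSpace ℝ (Fin N), x ≠ 0 → 0 < v x)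
    (heq : ∀ x : EuclideanSpace ℝ (Fin N), x ≠ 0 →
      ‖x‖ ^ (-2 * a) * lap v x
        - 2 * a * ‖x‖ ^ (-2 * a - 2) * (inner ℝ x (gradient v x) : ℝ)
        + d * ‖x‖ ^ (-2 * (1 + a)) * v x = ‖x‖ ^ b * v x ^ q) :
    ∀ x : EuclideanSpace ℝ (Fin N), x ≠ 0 →
      ‖x‖ ^ (-2 * a) * lap (fun y => ‖y‖ ^ ((2 : ℝ) - N + 2 * a) * v ((‖y‖ ^ 2)⁻¹ • y)) x
        - 2 * a * ‖x‖ ^ (-2 * a - 2)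
          * (inner ℝ x (gradient (fun y => ‖y‖ ^ ((2 : ℝ) - N + 2 * a) * v ((‖y‖ ^ 2)⁻¹ • y)) x) : ℝ)
        + d * ‖x‖ ^ (-2 * (1 + a)) * (‖x‖ ^ ((2 : ℝ) - N + 2 * a) * v ((‖x‖ ^ 2)⁻¹ • x))
      = ‖x‖ ^ (((N : ℝ) - 2 - 2 * a) * q - ((N : ℝ) + 2 * a + b + 2))
          * (‖x‖ ^ ((2 : ℝ) - N + 2 * a) * v ((‖x‖ ^ 2)⁻¹ • x)) ^ q := by
  intro x hx
  have hr : 0 < ‖x‖ := norm_pos_iff.mpr hx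
  have hx' : unitInversion x ≠ 0 := unitInversion_ne_zero hx
  have hvx : hardyOperator a d v (unitInversion x)
      = ‖unitInversion x‖ ^ b * v (unitInversion x) ^ q := heq _ hx'
  change hardyOperator a d (kelvin (2 - N + 2 * a) v) x
    = _ * (‖x‖ ^ ((2 : ℝ) - N + 2 * a) * v (unitInversion x)) ^ q
  rw [hardyOperator_kelvin hx (hv.contDiffAt (isOpen_compl_singleton.mem_nhds hx')), hvx,
    norm_unitInversion, Real.mul_rpow (by positivity) (hpos _ hx').le, Real.inv_rpow hr.le,
    ← Real.rpow_neg hr.le, ← Real.rpow_mul hr.le, ← mul_assoc, ← mul_assoc,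
    ← Real.rpow_add hr, ← Real.rpow_add hr]
  ring_nf

theorem stmt_17 (N : ℕ) (hN : 3 ≤ N) (a b d q : ℝ) (hq : 1 < q)
    (v : EuclideanSpace ℝ (Fin N) → ℝ) (hv : ContDiffOn ℝ 2 v {0}ᶜ)
    (hpos : ∀ x : EuclideanSpace ℝ (Fin N), x ≠ 0 → 0 < v x)
    (heq : ∀ x : EuclideanSpace ℝ (Fin N), x ≠ 0 →
      ‖x‖ ^ (-2 * a) * lap v x
        - 2 * a * ‖x‖ ^ (-2 * a - 2) * (inner ℝ x (gradient v x) : ℝ)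
        + d * ‖x‖ ^ (-2 * (1 + a)) * v x = ‖x‖ ^ b * v x ^ q) :
    ∀ x : EuclideanSpace ℝ (Fin N), x ≠ 0 →
      ‖x‖ ^ (-2 * a) * lap (fun y => ‖y‖ ^ ((2 : ℝ) - N + 2 * a) * v ((‖y‖ ^ 2)⁻¹ • y)) x
        - 2 * a * ‖x‖ ^ (-2 * a - 2)
          * (inner ℝ x (gradient (fun y => ‖y‖ ^ ((2 : ℝ) - N + 2 * a) * v ((‖y‖ ^ 2)⁻¹ • y)) x) : ℝ)
        + d * ‖x‖ ^ (-2 * (1 + a)) * (‖x‖ ^ ((2 : ℝ) - N + 2 * a) * v ((‖x‖ ^ 2)⁻¹ • x))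
      = ‖x‖ ^ (((N : ℝ) - 2 - 2 * a) * q - ((N : ℝ) + 2 * a + b + 2))
          * (‖x‖ ^ ((2 : ℝ) - N + 2 * a) * v ((‖x‖ ^ 2)⁻¹ • x)) ^ q :=
  stmt_17_general N a b d q v hv hpos heq
end
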